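/- arXiv:2007.04880 — 2 statements merged into one kernel-verified Lean document; each statement's English description precedes it below -/
import Mathlib

section
/- Let τ : ℝ^n → ℝ^n be a unimodular transformation, τ(x) = Ux + v with U ∈ ℤ^{n×n} unimodular and v ∈ ℤ^n. Let S ⊆ ℤ^n be nonempty and let P ⊆ conv(S) be a nonempty rational polyhedron. For Π ⊆ Π_P define τ(Π) := {(αU^{-1}, β + αU^{-1}v) : (α,β) ∈ Π}. Then τ(P) ⊆ conv(τ(S)), τ(Π) ⊆ Π_{τ(P)}, and τ(P_{S,Π}) = τ(P)_{τ(S),τ(Π)}. In particular, τ(P_S) = τ(P)_{τ(S)}. -/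
open scoped Classical Pointwise

/-- Coercion of an integer vector to a real vector. -/
def coeZR {n : ℕ} (z : Fin n → ℤ) : Fin n → ℝ := fun i => (z i : ℝ)

/-- Dot product of an integer coefficient vector with a real vector. -/
def dotIR {n : ℕ} (a : Fin n → ℤ) (x : Fin n → ℝ) : ℝ := ∑ i, (a i : ℝ) * x i

/-- A rational polyhedron in `ℝ^n`. -/
def IsRatPolyhedron {n : ℕ} (P : Set (Fin n → ℝ)) : Prop :=
  ∃ (m : ℕ) (C : Matrix (Fin m) (Fin n) ℚ) (d : Fin m → ℚ),
    P = {x | ∀ i, ∑ j, (C i j : ℝ) * x j ≤ (d i : ℝ)}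

/-- `⌊β⌋_{S,α} = max {αz : z ∈ S, αz ≤ β}`. -/
noncomputable def floorS {n : ℕ} (S : Set (Fin n → ℤ)) (a : Fin n → ℤ) (β : ℝ) : ℝ :=
  sSup {t : ℝ | ∃ z ∈ S, dotIR a (coeZR z) = t ∧ t ≤ β}

/-- `⌈β⌉_{S,α} = min {αz : z ∈ S, αz ≥ β}`. -/
noncomputable def ceilS {n : ℕ} (S : Set (Fin n → ℤ)) (a : Fin n → ℤ) (β : ℝ) : ℝ :=
  sInf {t : ℝ | ∃ z ∈ S, dotIR a (coeZR z) = t ∧ β ≤ t}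

/-- Points satisfying the S-CG cut `αx ≤ ⌊β⌋_{S,α}` derived from `αx ≤ β`
(the cut is `0x ≤ -1`, i.e. the empty set, if no `z ∈ S` satisfies `αz ≤ β`). -/
noncomputable def cutLe {n : ℕ} (S : Set (Fin n → ℤ)) (a : Fin n → ℤ) (β : ℝ) :
    Set (Fin n → ℝ) :=
  if ∃ z ∈ S, dotIR a (coeZR z) ≤ β then {x | dotIR a x ≤ floorS S a β} else ∅

/-- Points satisfying the S-CG cut `αx ≥ ⌈β⌉_{S,α}` derived from `αx ≥ β`. -/
noncomputable def cutGe {n : ℕ} (S : Set (Fin n → ℤ)) (a : Fin n → ℤ) (β : ℝ) :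
    Set (Fin n → ℝ) :=
  if ∃ z ∈ S, β ≤ dotIR a (coeZR z) then {x | ceilS S a β ≤ dotIR a x} else ∅

/-- `Π_P` for `P = {x : Ax ≤ b}`: pairs `(λA, λb)` with `λ ≥ 0`, `λA` integral and
`λb = max {λAx : x ∈ P}`. -/
def PiLe {n m : ℕ} (A : Matrix (Fin m) (Fin n) ℤ) (b : Fin m → ℤ) (P : Set (Fin n → ℝ)) :
    Set ((Fin n → ℤ) × ℝ) :=
  {p | ∃ lam : Fin m → ℝ, (∀ i, 0 ≤ lam i)
      ∧ (∀ j, (p.1 j : ℝ) = ∑ i, lam i * (A i j : ℝ))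
      ∧ (p.2 = ∑ i, lam i * (b i : ℝ))
      ∧ IsGreatest {t : ℝ | ∃ x ∈ P, dotIR p.1 x = t} p.2}

/-- `Π_{P↑}` for `P↑ = {x : Ax ≥ b}`: pairs `(λA, λb)` with `λ ≥ 0`, `λA` integral and
`λb = min {λAx : x ∈ P↑}`. -/
def PiGe {n m : ℕ} (A : Matrix (Fin m) (Fin n) ℤ) (b : Fin m → ℤ) (P : Set (Fin n → ℝ)) :
    Set ((Fin n → ℤ) × ℝ) :=
  {p | ∃ lam : Fin m → ℝ, (∀ i, 0 ≤ lam i)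
      ∧ (∀ j, (p.1 j : ℝ) = ∑ i, lam i * (A i j : ℝ))
      ∧ (p.2 = ∑ i, lam i * (b i : ℝ))
      ∧ IsLeast {t : ℝ | ∃ x ∈ P, dotIR p.1 x = t} p.2}

/-- `P_{S,Ω}` : intersection of the S-CG cuts `αx ≤ ⌊β⌋_{S,α}` over `(α,β) ∈ Ω`. -/
noncomputable def closLe {n : ℕ} (S : Set (Fin n → ℤ)) (Om : Set ((Fin n → ℤ) × ℝ)) :
    Set (Fin n → ℝ) :=
  ⋂ p ∈ Om, cutLe S p.1 p.2

/-- `P↑_{S,Ω}` : intersection of the S-CG cuts `αx ≥ ⌈β⌉_{S,α}` over `(α,β) ∈ Ω`. -/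
noncomputable def closGe {n : ℕ} (S : Set (Fin n → ℤ)) (Om : Set ((Fin n → ℤ) × ℝ)) :
    Set (Fin n → ℝ) :=
  ⋂ p ∈ Om, cutGe S p.1 p.2

/-- The cone generated by a finite family of vectors. -/
def coneOf {n : ℕ} {ι : Type} [Fintype ι] (w : ι → Fin n → ℝ) : Set (Fin n → ℝ) :=
  {x | ∃ c : ι → ℝ, (∀ j, 0 ≤ c j) ∧ x = ∑ j, c j • w j}

/-- The unit vectors `e^1, …, e^{n₁}` of `ℝ^{n₁} × {0}` inside `ℝ^n`. -/
def unitVecs {n : ℕ} (n₁ : ℕ) : Fin n₁ → Fin n → ℝ :=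
  fun i j => if (j : ℕ) = (i : ℕ) then 1 else 0

/-- The recession cone of a subset of `ℝ^n`. -/
def recCone {n : ℕ} (P : Set (Fin n → ℝ)) : Set (Fin n → ℝ) :=
  {r | ∀ x ∈ P, ∀ t : ℝ, 0 ≤ t → x + t • r ∈ P}

/-- The lineality space of a subset of `ℝ^n`. -/
def linealitySp {n : ℕ} (P : Set (Fin n → ℝ)) : Set (Fin n → ℝ) :=
  {r | ∀ x ∈ P, ∀ t : ℝ, x + t • r ∈ P}

/-- The recession cone of a subset of `ℝ^n × ℝ`. -/
def recConePair {n : ℕ} (H : Set ((Fin n → ℝ) × ℝ)) : Set ((Fin n → ℝ) × ℝ) :=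
  {r | ∀ p ∈ H, ∀ t : ℝ, 0 ≤ t → p + t • r ∈ H}

/-- A rational polyhedron in `ℝ^n × ℝ`. -/
def IsRatPolyhedronPair {n : ℕ} (H : Set ((Fin n → ℝ) × ℝ)) : Prop :=
  ∃ (m : ℕ) (C : Matrix (Fin m) (Fin n) ℚ) (c d : Fin m → ℚ),
    H = {p | ∀ i, ∑ j, (C i j : ℝ) * p.1 j + (c i : ℝ) * p.2 ≤ (d i : ℝ)}

/-- Auxiliary sequence: `MseqAux c M1 k = (M_{k+1}, M_1 ⋯ M_{k+1})` where `M_1 = M1` and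
`M_i = (c · M_1 ⋯ M_{i-1})^{i-1} · M_1` for `i ≥ 2` (with `c = 2mB`). -/
def MseqAux (c M1 : ℤ) : ℕ → ℤ × ℤ
  | 0 => (M1, M1)
  | k + 1 =>
      let p := (MseqAux c M1 k).2
      let next := (c * p) ^ (k + 1) * M1
      (next, p * next)

/-- `Mseq c M1 k = M_{k+1}`. -/
def Mseq (c M1 : ℤ) (k : ℕ) : ℤ := (MseqAux c M1 k).1

/-- `M = M_1 ⋯ M_{m-1}` if `m ≥ 2`, and `M = 1` if `m = 1`, where
`M_1 = 2(mB + 2D)` and `M_i = (2mB · M_1 ⋯ M_{i-1})^{i-1} · M_1`. -/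
def bigM (m : ℕ) (B D : ℤ) : ℤ :=
  ∏ k ∈ Finset.range (m - 1), Mseq (2 * (m : ℤ) * B) (2 * ((m : ℤ) * B + 2 * D)) k

/-- `⌊β⌋_{S,α}` for a mixed-integer set `S ⊆ ℤ^n × ℝ^l`. -/
noncomputable def floorMix {n l : ℕ} (S : Set ((Fin n → ℤ) × (Fin l → ℝ)))
    (a : Fin n → ℤ) (β : ℝ) : ℝ :=
  sSup {t : ℝ | ∃ p ∈ S, dotIR a (coeZR p.1) = t ∧ t ≤ β}

/-- Points of `ℝ^n × ℝ^l` satisfying the S-CG cut `αx ≤ ⌊β⌋_{S,α}` for a mixed-integer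
set `S` (the cut is `0x ≤ -1` if no `(x,y) ∈ S` satisfies `αx ≤ β`). -/
noncomputable def cutMix {n l : ℕ} (S : Set ((Fin n → ℤ) × (Fin l → ℝ)))
    (a : Fin n → ℤ) (β : ℝ) : Set ((Fin n → ℝ) × (Fin l → ℝ)) :=
  if ∃ p ∈ S, dotIR a (coeZR p.1) ≤ β then {q | dotIR a q.1 ≤ floorMix S a β} else ∅

/-- A rational polyhedron in `ℝ^n × ℝ^l`. -/
def IsRatPolyhedronProd {n l : ℕ} (P : Set ((Fin n → ℝ) × (Fin l → ℝ))) : Prop :=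
  ∃ (m : ℕ) (A : Matrix (Fin m) (Fin n) ℚ) (C : Matrix (Fin m) (Fin l) ℚ) (d : Fin m → ℚ),
    P = {p | ∀ i, ∑ j, (A i j : ℝ) * p.1 j + ∑ j, (C i j : ℝ) * p.2 j ≤ (d i : ℝ)}

lemma sSup_add_const (T : Set ℝ) (hne : T.Nonempty) (hbd : BddAbove T) (c : ℝ) :
    sSup ((fun t => t + c) '' T) = sSup T + c := by
  apply IsLUB.csSup_eq _ (hne.image _)
  have h := isLUB_csSup hne hbd
  constructor
  · rintro _ ⟨t, ht, rfl⟩; exact add_le_add_left (h.1 ht) c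
  · intro u hu
    have h2 : sSup T ≤ u - c := h.2 (fun t ht => by
      have := hu ⟨t, ht, rfl⟩; simp at this; linarith)
    linarith

/-- **Unimodular mapping lemma.** Let `τ(x) = Ux + v` be a unimodular
transformation, `S ⊆ ℤ^n` nonempty and `P ⊆ conv(S)` a nonempty rational polyhedron.
Then `τ(P) ⊆ conv(τ(S))`, `τ(Π) ⊆ Π_{τ(P)}`, `τ(P_{S,Π}) = τ(P)_{τ(S),τ(Π)}`, and in
particular `τ(P_S) = τ(P)_{τ(S)}` (where `τ(P) = {y : (AU⁻¹)y ≤ b + (AU⁻¹)v}`). -/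
theorem scg_closure_unimodular_map {n m : ℕ}
    (U : Matrix (Fin n) (Fin n) ℤ) (hU : IsUnit U.det) (v : Fin n → ℤ)
    (S : Set (Fin n → ℤ)) (hSne : S.Nonempty)
    (A : Matrix (Fin m) (Fin n) ℤ) (b : Fin m → ℤ) (P : Set (Fin n → ℝ))
    (hP : P = {x | ∀ i, ∑ j, (A i j : ℝ) * x j ≤ (b i : ℝ)})
    (hPne : P.Nonempty) (hPsub : P ⊆ convexHull ℝ (coeZR '' S))
    (tR : (Fin n → ℝ) → (Fin n → ℝ))
    (htR : tR = fun x => fun i => (∑ j, (U i j : ℝ) * x j) + (v i : ℝ))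
    (tZ : (Fin n → ℤ) → (Fin n → ℤ))
    (htZ : tZ = fun z => fun i => (∑ j, U i j * z j) + v i)
    (tPi : ((Fin n → ℤ) × ℝ) → ((Fin n → ℤ) × ℝ))
    (htPi : tPi = fun p => (fun j => ∑ i, p.1 i * (U⁻¹) i j,
        p.2 + ∑ j, ((∑ i, p.1 i * (U⁻¹) i j : ℤ) : ℝ) * (v j : ℝ)))
    (Om : Set ((Fin n → ℤ) × ℝ)) (hOm : Om ⊆ PiLe A b P) :
    tR '' P ⊆ convexHull ℝ (coeZR '' (tZ '' S))
    ∧ tPi '' Om ⊆ PiLe (A * U⁻¹) (fun i => b i + ∑ j, (A * U⁻¹) i j * v j) (tR '' P)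
    ∧ tR '' closLe S Om = closLe (tZ '' S) (tPi '' Om)
    ∧ tR '' closLe S (PiLe A b P)
        = closLe (tZ '' S)
            (PiLe (A * U⁻¹) (fun i => b i + ∑ j, (A * U⁻¹) i j * v j) (tR '' P)) := by
  have hUV : U * U⁻¹ = 1 := Matrix.mul_nonsing_inv U hU
  have hVU : U⁻¹ * U = 1 := Matrix.nonsing_inv_mul U hU
  have htR' : ∀ x i, tR x i = (∑ j, (U i j : ℝ) * x j) + (v i : ℝ) := by
    intro x i; rw [htR]
  have htZ' : ∀ z i, tZ z i = (∑ j, U i j * z j) + v i := by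
    intro z i; rw [htZ]
  have htPi1 : ∀ p : (Fin n → ℤ) × ℝ, (tPi p).1 = Matrix.vecMul p.1 U⁻¹ := by
    intro p; rw [htPi]; funext j; simp [Matrix.vecMul, dotProduct]
  have htPi2 : ∀ p : (Fin n → ℤ) × ℝ,
      (tPi p).2 = p.2 + dotIR (Matrix.vecMul p.1 U⁻¹) (coeZR v) := by
    intro p; rw [htPi]; simp [dotIR, coeZR, Matrix.vecMul, dotProduct]
  have hcastVM : ∀ (a : Fin n → ℤ) (W : Matrix (Fin n) (Fin n) ℤ) (j : Fin n),
      ((Matrix.vecMul a W) j : ℝ) = ∑ i, (a i : ℝ) * (W i j : ℝ) := by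
    intro a W j
    simp only [Matrix.vecMul, dotProduct]
    push_cast
    rfl
  have hDot : ∀ (a : Fin n → ℤ) (x : Fin n → ℝ),
      dotIR a (tR x) = dotIR (Matrix.vecMul a U) x + dotIR a (coeZR v) := by
    intro a x
    simp only [dotIR, coeZR, htR', mul_add, Finset.sum_add_distrib]
    congr 1
    simp only [hcastVM, Finset.mul_sum, Finset.sum_mul]
    rw [Finset.sum_comm]
    exact Finset.sum_congr rfl fun i _ => Finset.sum_congr rfl fun j _ => by ring
  have hVecInv : ∀ a : Fin n → ℤ, Matrix.vecMul (Matrix.vecMul a U⁻¹) U = a := by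
    intro a; rw [Matrix.vecMul_vecMul, hVU, Matrix.vecMul_one]
  have hA2 : ∀ (a : Fin n → ℤ) (x : Fin n → ℝ),
      dotIR (Matrix.vecMul a U⁻¹) (tR x)
        = dotIR a x + dotIR (Matrix.vecMul a U⁻¹) (coeZR v) := by
    intro a x; rw [hDot, hVecInv]
  have hcomm : ∀ z : Fin n → ℤ, tR (coeZR z) = coeZR (tZ z) := by
    intro z; funext i
    rw [htR' (coeZR z) i]
    simp only [coeZR]
    rw [htZ' z i]
    push_cast
    rfl
  have hB : ∀ (a : Fin n → ℤ) (z : Fin n → ℤ),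
      dotIR (Matrix.vecMul a U⁻¹) (coeZR (tZ z))
        = dotIR a (coeZR z) + dotIR (Matrix.vecMul a U⁻¹) (coeZR v) := by
    intro a z; rw [← hcomm, hA2]
  have hdelta : ∀ (M N : Matrix (Fin n) (Fin n) ℤ), M * N = 1 → ∀ i k,
      (∑ j, (M i j : ℝ) * (N j k : ℝ)) = if i = k then 1 else 0 := by
    intro M N h i k
    have h2 : ((M * N) i k : ℤ) = if i = k then 1 else 0 := by rw [h]; simp [Matrix.one_apply]
    rw [Matrix.mul_apply] at h2
    have h3 : (∑ j, (M i j : ℝ) * (N j k : ℝ)) = ((∑ j, M i j * N j k : ℤ) : ℝ) := by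
      push_cast; rfl
    rw [h3, h2]; split <;> simp
  have hswap : ∀ (f : Fin n → ℝ) (g : Fin n → Fin n → ℝ) (e : Fin n → ℝ),
      (∑ j, f j * ∑ k, g j k * e k) = ∑ k, (∑ j, f j * g j k) * e k := by
    intro f g e
    simp only [Finset.mul_sum, Finset.sum_mul]
    rw [Finset.sum_comm]
    exact Finset.sum_congr rfl fun k _ => Finset.sum_congr rfl fun j _ => by ring
  set tS : (Fin n → ℝ) → (Fin n → ℝ) :=
    fun y i => ∑ j, ((U⁻¹) i j : ℝ) * (y j - (v j : ℝ)) with htS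
  have htRS : ∀ y, tR (tS y) = y := by
    intro y; funext i
    rw [htR']
    simp only [htS]
    rw [hswap (fun j => (U i j : ℝ)) (fun j k => ((U⁻¹) j k : ℝ)) (fun k => y k - (v k : ℝ))]
    simp only [hdelta U U⁻¹ hUV]
    simp only [ite_mul, one_mul, zero_mul, Finset.sum_ite_eq, Finset.mem_univ, if_true]
    ring
  have htSR : ∀ x, tS (tR x) = x := by
    intro x; funext i
    simp only [htS]
    have h1 : ∀ j, tR x j - (v j : ℝ) = ∑ k, (U j k : ℝ) * x k := by
      intro j; rw [htR']; ring
    simp only [h1]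
    rw [hswap (fun j => ((U⁻¹) i j : ℝ)) (fun j k => (U j k : ℝ)) x]
    simp only [hdelta U⁻¹ U hVU]
    simp only [ite_mul, one_mul, zero_mul, Finset.sum_ite_eq, Finset.mem_univ, if_true]
  have hcut : ∀ (a : Fin n → ℤ) (β : ℝ) (x : Fin n → ℝ),
      x ∈ cutLe S a β ↔ tR x ∈ cutLe (tZ '' S) (Matrix.vecMul a U⁻¹)
        (β + dotIR (Matrix.vecMul a U⁻¹) (coeZR v)) := by
    intro a β x
    have hexiff : (∃ z ∈ S, dotIR a (coeZR z) ≤ β)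
        ↔ (∃ w ∈ tZ '' S, dotIR (Matrix.vecMul a U⁻¹) (coeZR w)
            ≤ β + dotIR (Matrix.vecMul a U⁻¹) (coeZR v)) := by
      constructor
      · rintro ⟨z, hz, hle⟩
        exact ⟨tZ z, ⟨z, hz, rfl⟩, by rw [hB]; linarith⟩
      · rintro ⟨w, ⟨z, hz, rfl⟩, hle⟩
        rw [hB] at hle
        exact ⟨z, hz, by linarith⟩
    by_cases hE : ∃ z ∈ S, dotIR a (coeZR z) ≤ β
    · have hE' := hexiff.mp hE
      have hset : {t : ℝ | ∃ w ∈ tZ '' S, dotIR (Matrix.vecMul a U⁻¹) (coeZR w) = t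
            ∧ t ≤ β + dotIR (Matrix.vecMul a U⁻¹) (coeZR v)}
          = (fun t => t + dotIR (Matrix.vecMul a U⁻¹) (coeZR v)) ''
            {t : ℝ | ∃ z ∈ S, dotIR a (coeZR z) = t ∧ t ≤ β} := by
        ext t
        constructor
        · rintro ⟨w, ⟨z, hz, rfl⟩, rfl, hle⟩
          exact ⟨dotIR a (coeZR z), ⟨z, hz, rfl, by rw [hB] at hle; linarith⟩, (hB a z).symm⟩
        · rintro ⟨t0, ⟨z, hz, rfl, hle⟩, rfl⟩
          exact ⟨tZ z, ⟨z, hz, rfl⟩, hB a z, by linarith⟩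
      have hfl : floorS (tZ '' S) (Matrix.vecMul a U⁻¹)
            (β + dotIR (Matrix.vecMul a U⁻¹) (coeZR v))
          = floorS S a β + dotIR (Matrix.vecMul a U⁻¹) (coeZR v) := by
        simp only [floorS]
        rw [hset]
        apply sSup_add_const
        · obtain ⟨z, hz, hle⟩ := hE; exact ⟨dotIR a (coeZR z), z, hz, rfl, hle⟩
        · exact ⟨β, by rintro t ⟨z, hz, rfl, hle⟩; exact hle⟩
      simp only [cutLe, if_pos hE, if_pos hE', Set.mem_setOf_eq, hfl, hA2 a x]
      constructor <;> intro h <;> linarith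
    · have hE' : ¬ ∃ w ∈ tZ '' S, dotIR (Matrix.vecMul a U⁻¹) (coeZR w)
          ≤ β + dotIR (Matrix.vecMul a U⁻¹) (coeZR v) := fun h => hE (hexiff.mpr h)
      simp only [cutLe, if_neg hE, if_neg hE', Set.mem_empty_iff_false]
  have himg : ∀ Om' : Set ((Fin n → ℤ) × ℝ),
      tR '' closLe S Om' = closLe (tZ '' S) (tPi '' Om') := by
    intro Om'
    ext y
    simp only [closLe, Set.mem_image, Set.mem_iInter]
    constructor
    · rintro ⟨x, hx, rfl⟩
      rintro p ⟨q, hq, rfl⟩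
      rw [htPi1 q, htPi2 q]
      exact (hcut q.1 q.2 x).mp (hx q hq)
    · intro hy
      refine ⟨tS y, ?_, htRS y⟩
      intro p hp
      have h1 := hy (tPi p) ⟨p, hp, rfl⟩
      rw [htPi1 p, htPi2 p] at h1
      have h2 := hcut p.1 p.2 (tS y)
      rw [htRS y] at h2
      exact h2.mpr h1
  have hpart1 : tR '' P ⊆ convexHull ℝ (coeZR '' (tZ '' S)) := by
    let f : (Fin n → ℝ) →ᵃ[ℝ] (Fin n → ℝ) :=
      AffineMap.mk' tR ((U.map (Int.cast : ℤ → ℝ)).mulVecLin) 0 (by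
        intro p
        funext i
        simp only [Matrix.mulVecLin_apply, Matrix.mulVec, dotProduct,
          Matrix.map_apply, vsub_eq_sub, vadd_eq_add, Pi.add_apply, Pi.sub_apply]
        rw [htR' p i, htR' 0 i]
        simp)
    have hfeq : ∀ x, f x = tR x := fun x => rfl
    have hcoe : (f : (Fin n → ℝ) → (Fin n → ℝ)) = tR := funext hfeq
    calc tR '' P ⊆ tR '' convexHull ℝ (coeZR '' S) := Set.image_mono hPsub
    _ = f '' convexHull ℝ (coeZR '' S) := by rw [hcoe]
    _ = convexHull ℝ (f '' (coeZR '' S)) := f.image_convexHull _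
    _ = convexHull ℝ (coeZR '' (tZ '' S)) := by
        congr 1
        rw [Set.image_image, Set.image_image]
        exact Set.image_congr fun z _ => by rw [hfeq, hcomm]
  have hcoordMul : ∀ {m' : ℕ} (A' : Matrix (Fin m') (Fin n) ℤ) (lam : Fin m' → ℝ)
      (a : Fin n → ℤ) (W : Matrix (Fin n) (Fin n) ℤ),
      (∀ i, (a i : ℝ) = ∑ k, lam k * (A' k i : ℝ)) →
      ∀ j, ((Matrix.vecMul a W) j : ℝ) = ∑ k, lam k * ((A' * W) k j : ℝ) := by
    intro m' A' lam a W h j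
    rw [hcastVM]
    have h2 : ∀ k, ((A' * W) k j : ℝ) = ∑ i, (A' k i : ℝ) * (W i j : ℝ) := by
      intro k; rw [Matrix.mul_apply]; push_cast; rfl
    simp only [h, h2, Finset.mul_sum, Finset.sum_mul]
    rw [Finset.sum_comm]
    exact Finset.sum_congr rfl fun k _ => Finset.sum_congr rfl fun i _ => by ring
  have hdotv : ∀ {m' : ℕ} (A' : Matrix (Fin m') (Fin n) ℤ) (lam : Fin m' → ℝ)
      (a : Fin n → ℤ) (W : Matrix (Fin n) (Fin n) ℤ),
      (∀ i, (a i : ℝ) = ∑ k, lam k * (A' k i : ℝ)) →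
      dotIR (Matrix.vecMul a W) (coeZR v)
        = ∑ k, lam k * ((∑ j, (A' * W) k j * v j : ℤ) : ℝ) := by
    intro m' A' lam a W h
    simp only [dotIR, coeZR, hcoordMul A' lam a W h]
    have h2 : ∀ k, ((∑ j, (A' * W) k j * v j : ℤ) : ℝ)
        = ∑ j, ((A' * W) k j : ℝ) * (v j : ℝ) := by
      intro k; push_cast; rfl
    simp only [h2, Finset.mul_sum, Finset.sum_mul]
    rw [Finset.sum_comm]
    exact Finset.sum_congr rfl fun k _ => Finset.sum_congr rfl fun j _ => by ring
  have hpart2 : ∀ Om' : Set ((Fin n → ℤ) × ℝ), Om' ⊆ PiLe A b P →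
      tPi '' Om' ⊆ PiLe (A * U⁻¹) (fun i => b i + ∑ j, (A * U⁻¹) i j * v j) (tR '' P) := by
    intro Om' hOm' q hq
    obtain ⟨p, hp, rfl⟩ := hq
    obtain ⟨lam, hlam0, hlamA, hlamb, hgr⟩ := hOm' hp
    refine ⟨lam, hlam0, ?_, ?_, ?_⟩
    · intro j
      rw [htPi1 p]
      exact hcoordMul A lam p.1 U⁻¹ hlamA j
    · rw [htPi2 p, hlamb, hdotv A lam p.1 U⁻¹ hlamA, ← Finset.sum_add_distrib]
      exact Finset.sum_congr rfl fun i _ => by push_cast; ring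
    · rw [htPi1 p, htPi2 p]
      constructor
      · obtain ⟨x0, hx0, hx0e⟩ := hgr.1
        exact ⟨tR x0, ⟨x0, hx0, rfl⟩, by rw [hA2 p.1 x0, hx0e]⟩
      · rintro t ⟨y, ⟨x, hx, rfl⟩, rfl⟩
        rw [hA2 p.1 x]
        have h3 := hgr.2 ⟨x, hx, rfl⟩
        linarith
  have hApU : A * U⁻¹ * U = A := by rw [Matrix.mul_assoc, hVU, Matrix.mul_one]
  have hconv : PiLe (A * U⁻¹) (fun i => b i + ∑ j, (A * U⁻¹) i j * v j) (tR '' P)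
      ⊆ tPi '' PiLe A b P := by
    intro q hq
    obtain ⟨lam, hlam0, hlamA, hlamb, hgr⟩ := hq
    have hdv : dotIR q.1 (coeZR v) = ∑ k, lam k * ((∑ j, (A * U⁻¹) k j * v j : ℤ) : ℝ) := by
      have h := hdotv (A * U⁻¹) lam q.1 1 hlamA
      rwa [Matrix.vecMul_one, Matrix.mul_one] at h
    refine ⟨(Matrix.vecMul q.1 U, q.2 - dotIR q.1 (coeZR v)), ⟨lam, hlam0, ?_, ?_, ?_⟩, ?_⟩
    · intro j
      have h := hcoordMul (A * U⁻¹) lam q.1 U hlamA j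
      rwa [hApU] at h
    · show q.2 - dotIR q.1 (coeZR v) = _
      rw [hlamb, hdv, ← Finset.sum_sub_distrib]
      exact Finset.sum_congr rfl fun i _ => by push_cast; ring
    · constructor
      · obtain ⟨y0, ⟨x0, hx0, rfl⟩, he⟩ := hgr.1
        refine ⟨x0, hx0, ?_⟩
        have h2 := hDot q.1 x0
        rw [he] at h2
        dsimp only
        linarith
      · rintro t ⟨x, hx, rfl⟩
        have h2 := hgr.2 ⟨tR x, ⟨x, hx, rfl⟩, rfl⟩
        rw [hDot q.1 x] at h2
        dsimp only
        linarith
    · have h1 : Matrix.vecMul (Matrix.vecMul q.1 U) U⁻¹ = q.1 := by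
        rw [Matrix.vecMul_vecMul, hUV, Matrix.vecMul_one]
      apply Prod.ext
      · rw [htPi1]; exact h1
      · rw [htPi2]; simp only [h1]; ring
  refine ⟨hpart1, hpart2 Om hOm, himg Om, ?_⟩
  have heqPi : tPi '' PiLe A b P
      = PiLe (A * U⁻¹) (fun i => b i + ∑ j, (A * U⁻¹) i j * v j) (tR '' P) :=
    Set.Subset.antisymm (hpart2 _ (fun p hp => hp)) hconv
  rw [himg (PiLe A b P), heqPi]
end

section
/- Let S be a nonempty finite subset of ℤ^n and let P ⊆ ℝ^n be a nonempty rational polyhedron. Let H ⊆ ℝ^n × ℝ be a rational polyhedron that is contained in its own recession cone rec(H), and let Ω = Π_P ∩ H. Then P_{S,Ω} is a rational polyhedron. -/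
open scoped Classical Pointwise

namespace SCGAux

variable {p : ℕ}

/-- real dot product -/
def dotP (u v : Fin p → ℝ) : ℝ := ∑ i, u i * v i

lemma dotP_zero_right (u : Fin p → ℝ) : dotP u 0 = 0 := by simp [dotP]

lemma dotP_smul_right (u v : Fin p → ℝ) (c : ℝ) : dotP u (c • v) = c * dotP u v := by
  simp only [dotP, Pi.smul_apply, smul_eq_mul, Finset.mul_sum]
  exact Finset.sum_congr rfl (fun i _ => by ring)

lemma dotP_add_right (u v w : Fin p → ℝ) : dotP u (v + w) = dotP u v + dotP u w := by
  simp [dotP, mul_add, Finset.sum_add_distrib]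

lemma dotP_sum_right {ι : Type*} (u : Fin p → ℝ) (s : Finset ι) (f : ι → Fin p → ℝ) :
    dotP u (∑ l ∈ s, f l) = ∑ l ∈ s, dotP u (f l) := by
  classical
  induction s using Finset.induction with
  | empty => simp [dotP]
  | @insert a s' ha ih => simp [Finset.sum_insert ha, dotP_add_right, ih]

/-- rational vector -/
def QVec (v : Fin p → ℝ) : Prop := ∃ q : Fin p → ℚ, ∀ i, v i = (q i : ℝ)

lemma QVec.zero : QVec (0 : Fin p → ℝ) := ⟨0, by simp⟩

lemma QVec.dot_rat {u v : Fin p → ℝ} (hu : QVec u) (hv : QVec v) :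
    ∃ q : ℚ, dotP u v = (q : ℝ) := by
  obtain ⟨qu, hqu⟩ := hu; obtain ⟨qv, hqv⟩ := hv
  refine ⟨∑ i, qu i * qv i, by simp only [dotP, hqu, hqv]; push_cast; ring⟩

lemma QVec.comb {u v : Fin p → ℝ} {c d : ℝ} (hu : QVec u) (hv : QVec v)
    (hc : ∃ q : ℚ, c = (q : ℝ)) (hd : ∃ q : ℚ, d = (q : ℝ)) : QVec (c • u + d • v) := by
  obtain ⟨qu, hqu⟩ := hu; obtain ⟨qv, hqv⟩ := hv
  obtain ⟨qc, rfl⟩ := hc; obtain ⟨qd, rfl⟩ := hd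
  exact ⟨fun i => qc * qu i + qd * qv i, fun i => by simp [hqu, hqv]⟩

/-- common denominator -/
lemma exists_int_multiple {k : ℕ} (q : Fin k → ℚ) :
    ∃ N : ℕ, 0 < N ∧ ∀ j, ∃ z : ℤ, (N : ℚ) * q j = (z : ℚ) := by
  refine ⟨∏ j, (q j).den, Finset.prod_pos (fun j _ => (q j).pos), fun j => ?_⟩
  refine ⟨(q j).num * ∏ j' ∈ Finset.univ.erase j, ((q j').den : ℤ), ?_⟩
  have h1 : (∏ j', ((q j').den : ℚ)) = ((q j).den : ℚ) * ∏ j' ∈ Finset.univ.erase j, ((q j').den : ℚ) :=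
    (Finset.mul_prod_erase _ _ (Finset.mem_univ j)).symm
  push_cast
  rw [h1]
  have : ((q j).den : ℚ) * q j = ((q j).num : ℚ) := by
    rw [mul_comm]
    exact_mod_cast Rat.mul_den_eq_num (q j)
  calc ((q j).den : ℚ) * (∏ j' ∈ Finset.univ.erase j, ((q j').den : ℚ)) * q j
      = (((q j).den : ℚ) * q j) * ∏ j' ∈ Finset.univ.erase j, ((q j').den : ℚ) := by ring
    _ = _ := by rw [this]

/-- Polyhedron given by a finite set of rational inequalities. -/
def RPF {n : ℕ} (X : Set (Fin n → ℝ)) : Prop :=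
  ∃ F : Finset ((Fin n → ℚ) × ℚ),
    X = {x | ∀ f ∈ F, ∑ j, (f.1 j : ℝ) * x j ≤ (f.2 : ℝ)}

lemma RPF.isRatPolyhedron {n : ℕ} {X : Set (Fin n → ℝ)} (h : RPF X) : IsRatPolyhedron X := by
  obtain ⟨F, rfl⟩ := h
  refine ⟨F.card, fun i j => ((F.equivFin.symm i : _) : (Fin n → ℚ) × ℚ).1 j,
    fun i => ((F.equivFin.symm i : _) : (Fin n → ℚ) × ℚ).2, ?_⟩
  ext x
  constructor
  · intro hx i
    exact hx _ (F.equivFin.symm i).2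
  · intro hx f hf
    have := hx (F.equivFin ⟨f, hf⟩)
    simpa using this

lemma RPF.univ {n : ℕ} : RPF (Set.univ : Set (Fin n → ℝ)) :=
  ⟨∅, by ext x; simp⟩

lemma RPF.empty {n : ℕ} : RPF (∅ : Set (Fin n → ℝ)) := by
  refine ⟨{(0, -1)}, ?_⟩
  ext x
  simp only [Set.mem_empty_iff_false, Set.mem_setOf_eq, Finset.mem_singleton, false_iff]
  push_neg
  exact ⟨(0, -1), rfl, by norm_num⟩

lemma RPF.inter {n : ℕ} {X Y : Set (Fin n → ℝ)} (hX : RPF X) (hY : RPF Y) : RPF (X ∩ Y) := by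
  obtain ⟨F, rfl⟩ := hX; obtain ⟨G, rfl⟩ := hY
  refine ⟨F ∪ G, ?_⟩
  ext x
  simp only [Set.mem_inter_iff, Set.mem_setOf_eq, Finset.mem_union]
  constructor
  · rintro ⟨h1, h2⟩ f (hf | hf); exacts [h1 f hf, h2 f hf]
  · intro h; exact ⟨fun f hf => h f (Or.inl hf), fun f hf => h f (Or.inr hf)⟩

lemma RPF.biInter {n : ℕ} {ι : Type*} (u : Finset ι) (f : ι → Set (Fin n → ℝ))
    (h : ∀ q ∈ u, RPF (f q)) : RPF (⋂ q ∈ u, f q) := by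
  classical
  induction u using Finset.induction with
  | empty => simpa using RPF.univ
  | @insert a s ha ih =>
    rw [Finset.set_biInter_insert]
    exact RPF.inter (h a (Finset.mem_insert_self a s))
      (ih fun q hq => h q (Finset.mem_insert_of_mem hq))

end SCGAux
namespace SCGAux

variable {p : ℕ}

lemma comb_mem_rows {k : ℕ} (M : Fin k → Fin p → ℝ) {κ : Type*} [Fintype κ]
    (g : κ → Fin p → ℝ) (hg : ∀ l j, dotP (M j) (g l) ≤ 0)
    (c : κ → ℝ) (hc : ∀ l, 0 ≤ c l) (j : Fin k) : dotP (M j) (∑ l, c l • g l) ≤ 0 := by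
  rw [dotP_sum_right]
  refine Finset.sum_nonpos fun l _ => ?_
  rw [dotP_smul_right]
  exact mul_nonpos_iff.mpr (Or.inl ⟨hc l, hg l j⟩)

lemma gen_pack {k : ℕ} (M : Fin k → Fin p → ℝ) {κ : Type*} [Fintype κ]
    (g : κ → Fin p → ℝ) (hQ : ∀ l, QVec (g l)) (hin : ∀ l j, dotP (M j) (g l) ≤ 0)
    (hgen : ∀ v : Fin p → ℝ, (∀ j, dotP (M j) v ≤ 0) →
      ∃ c : κ → ℝ, (∀ l, 0 ≤ c l) ∧ v = ∑ l, c l • g l) :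
    ∃ (N : ℕ) (g' : Fin N → Fin p → ℝ), (∀ l, QVec (g' l)) ∧
      (∀ l j, dotP (M j) (g' l) ≤ 0) ∧
      ∀ v : Fin p → ℝ, (∀ j, dotP (M j) v ≤ 0) ↔
        ∃ c : Fin N → ℝ, (∀ l, 0 ≤ c l) ∧ v = ∑ l, c l • g' l := by
  classical
  let e := Fintype.equivFin κ
  refine ⟨Fintype.card κ, g ∘ e.symm, fun l => hQ _, fun l j => hin _ j,
    fun v => ⟨fun hv => ?_, fun hv => ?_⟩⟩
  · obtain ⟨c, hc, hv'⟩ := hgen v hv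
    refine ⟨c ∘ e.symm, fun l => hc _, hv'.trans ?_⟩
    exact Fintype.sum_equiv e.symm (fun l' => (c ∘ e.symm) l' • (g ∘ e.symm) l')
      (fun l => c l • g l) (fun l' => rfl) |>.symm ▸ rfl
  · obtain ⟨c, hc, rfl⟩ := hv
    intro j
    exact comb_mem_rows M (g ∘ e.symm) (fun l j => hin _ j) c hc j

lemma sum_split {N : ℕ} (d : Fin N → ℝ) {β : Type*} [AddCommMonoid β] (f : Fin N → β) :
    ∑ l, f l = (∑ l ∈ Finset.univ.filter (fun l => 0 < d l), f l) +
      ((∑ l ∈ Finset.univ.filter (fun l => d l < 0), f l) +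
       (∑ l ∈ Finset.univ.filter (fun l => ¬ 0 < d l ∧ ¬ d l < 0), f l)) := by
  classical
  rw [← Finset.sum_filter_add_sum_filter_not Finset.univ (fun l => 0 < d l) f]
  congr 1
  rw [← Finset.sum_filter_add_sum_filter_not (Finset.univ.filter (fun l => ¬ 0 < d l))
    (fun l => d l < 0) f]
  congr 1
  · rw [Finset.filter_filter]
    apply Finset.sum_congr _ (fun _ _ => rfl)
    apply Finset.filter_congr
    intro l _
    simp only [and_iff_right_iff_imp]
    exact fun h => lt_asymm h
  · rw [Finset.filter_filter]

theorem dd : ∀ {k : ℕ} (M : Fin k → Fin p → ℝ), (∀ j, QVec (M j)) →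
    ∃ (N : ℕ) (g : Fin N → Fin p → ℝ), (∀ l, QVec (g l)) ∧
      (∀ l j, dotP (M j) (g l) ≤ 0) ∧
      ∀ v : Fin p → ℝ, (∀ j, dotP (M j) v ≤ 0) ↔
        ∃ c : Fin N → ℝ, (∀ l, 0 ≤ c l) ∧ v = ∑ l, c l • g l := by
  intro k
  induction k with
  | zero =>
    intro M hM
    apply gen_pack (κ := Fin p ⊕ Fin p) M
      (Sum.elim (fun i => fun i' => if i' = i then (1:ℝ) else 0)
                (fun i => fun i' => if i' = i then (-1:ℝ) else 0))
    · rintro (i | i)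
      · refine ⟨fun i' => if i' = i then 1 else 0, fun i' => ?_⟩
        simp only [Sum.elim_inl]
        split <;> simp
      · refine ⟨fun i' => if i' = i then -1 else 0, fun i' => ?_⟩
        simp only [Sum.elim_inr]
        split <;> simp
    · rintro (i | i) j <;> exact j.elim0
    · intro v _
      refine ⟨Sum.elim (fun i => max (v i) 0) (fun i => max (-(v i)) 0),
        by rintro (i | i) <;> exact le_max_right _ _, ?_⟩
      funext i'
      rw [Finset.sum_apply, Fintype.sum_sum_type]
      simp only [Sum.elim_inl, Sum.elim_inr, Pi.smul_apply, smul_eq_mul, mul_ite, mul_one,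
        mul_zero, mul_neg, Finset.sum_ite_eq, Finset.mem_univ, if_true]
      rcases le_total 0 (v i') with h | h
      · rw [max_eq_left h, max_eq_right (neg_nonpos.mpr h)]; ring
      · rw [max_eq_right h, max_eq_left (neg_nonneg.mpr h)]; ring
  | succ k ih =>
    intro M hM
    obtain ⟨N, g, hQ, hin, hgen⟩ := ih (fun j => M j.succ) (fun j => hM j.succ)
    classical
    set a : Fin p → ℝ := M 0 with ha
    set d : Fin N → ℝ := fun l => dotP a (g l) with hd
    have hda : ∀ l, dotP a (g l) = d l := fun l => rfl
    let h : Fin N ⊕ Fin N × Fin N → Fin p → ℝ := fun l' =>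
      match l' with
      | .inl l => if d l ≤ 0 then g l else 0
      | .inr uw => if 0 < d uw.1 ∧ d uw.2 < 0 then
          d uw.1 • g uw.2 + (-(d uw.2)) • g uw.1 else 0
    have hdrat : ∀ l, ∃ q : ℚ, d l = (q : ℝ) := fun l => (hM 0).dot_rat (hQ l)
    apply gen_pack M h
    · rintro (l | ⟨u, w⟩)
      · show QVec (if d l ≤ 0 then g l else 0)
        split
        · exact hQ l
        · exact QVec.zero
      · show QVec (if 0 < d u ∧ d w < 0 then d u • g w + (-(d w)) • g u else 0)
        split
        · refine QVec.comb (hQ w) (hQ u) (hdrat u) ?_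
          obtain ⟨q, hq⟩ := hdrat w
          exact ⟨-q, by rw [hq]; push_cast; ring⟩
        · exact QVec.zero
    · rintro (l | ⟨u, w⟩) j
      · show dotP (M j) (if d l ≤ 0 then g l else 0) ≤ 0
        split
        · rename_i hdl
          refine Fin.cases ?_ (fun j' => ?_) j
          · exact hdl
          · exact hin l j'
        · rw [dotP_zero_right]
      · show dotP (M j) (if 0 < d u ∧ d w < 0 then d u • g w + (-(d w)) • g u else 0) ≤ 0
        split
        · rename_i hcond
          refine Fin.cases ?_ (fun j' => ?_) j
          · rw [← ha, dotP_add_right, dotP_smul_right, dotP_smul_right, hda, hda]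
            nlinarith [hcond.1, hcond.2]
          · rw [dotP_add_right, dotP_smul_right, dotP_smul_right]
            have h1 := hin w j'
            have h2 := hin u j'
            nlinarith [hcond.1, hcond.2]
        · rw [dotP_zero_right]
    · intro v hv
      have hv0 : dotP a v ≤ 0 := hv 0
      obtain ⟨c, hc, hvsum⟩ := (hgen v).mp (fun j => hv j.succ)
      set Pf := Finset.univ.filter (fun l => 0 < d l) with hPf
      set Nf := Finset.univ.filter (fun l => d l < 0) with hNf
      set Zf := Finset.univ.filter (fun l => ¬ 0 < d l ∧ ¬ d l < 0) with hZf
      set σp : ℝ := ∑ l ∈ Pf, c l * d l with hσp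
      set σn : ℝ := -∑ l ∈ Nf, c l * d l with hσn
      have hσp0 : 0 ≤ σp := Finset.sum_nonneg fun l hl =>
        mul_nonneg (hc l) (le_of_lt (Finset.mem_filter.mp hl).2)
      have hσn0 : 0 ≤ σn := by
        rw [hσn, neg_nonneg]
        refine Finset.sum_nonpos fun l hl => ?_
        have := (Finset.mem_filter.mp hl).2
        exact mul_nonpos_iff.mpr (Or.inl ⟨hc l, le_of_lt this⟩)
      have hdav : dotP a v = σp + (-σn + 0) := by
        have h1 : dotP a v = ∑ l, c l * d l := by
          rw [hvsum, dotP_sum_right]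
          exact Finset.sum_congr rfl fun l _ => by rw [dotP_smul_right, hda]
        have h2 : ∑ l ∈ Zf, c l * d l = 0 := Finset.sum_eq_zero fun l hl => by
          have h3 := (Finset.mem_filter.mp hl).2
          have : d l = 0 := le_antisymm (not_lt.mp h3.1) (not_lt.mp h3.2)
          rw [this, mul_zero]
        rw [h1, sum_split d (fun l => c l * d l), h2, hσn, neg_neg]
      have hinl : ∀ l, h (Sum.inl l) = if d l ≤ 0 then g l else 0 := fun _ => rfl
      have hinr : ∀ uw, h (Sum.inr uw) = if 0 < d uw.1 ∧ d uw.2 < 0 then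
          d uw.1 • g uw.2 + (-(d uw.2)) • g uw.1 else 0 := fun _ => rfl
      set SP := ∑ l ∈ Pf, c l • g l with hSP
      set SN := ∑ l ∈ Nf, c l • g l with hSN
      set SZ := ∑ l ∈ Zf, c l • g l with hSZ
      have hvPNZ : v = SP + (SN + SZ) := by rw [hvsum, sum_split d (fun l => c l • g l)]
      rcases eq_or_lt_of_le hσp0 with hsp | hsp
      · -- case σp = 0
        have hcP : ∀ l, 0 < d l → c l = 0 := by
          intro l hdl
          have hzero := (Finset.sum_eq_zero_iff_of_nonneg (fun l' hl' =>
            mul_nonneg (hc l') (le_of_lt (Finset.mem_filter.mp hl').2))).mp hsp.symm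
          have h1 : c l * d l = 0 := hzero l (Finset.mem_filter.mpr ⟨Finset.mem_univ l, hdl⟩)
          rcases mul_eq_zero.mp h1 with h' | h'
          · exact h'
          · exact absurd h' (ne_of_gt hdl)
        refine ⟨Sum.elim (fun l => if d l ≤ 0 then c l else 0) (fun _ => 0), ?_, ?_⟩
        · rintro (l | uw)
          · simp only [Sum.elim_inl]
            split
            exacts [hc l, le_refl 0]
          · simp
        · rw [Fintype.sum_sum_type]
          simp only [Sum.elim_inl, Sum.elim_inr, hinl, hinr, zero_smul,
            Finset.sum_const_zero, add_zero]
          rw [hvsum]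
          apply Finset.sum_congr rfl
          intro l _
          by_cases hdl : d l ≤ 0
          · rw [if_pos hdl, if_pos hdl]
          · rw [if_neg hdl, if_neg hdl, hcP l (not_le.mp hdl), zero_smul, zero_smul]
      · -- case 0 < σp
        have hsn : 0 < σn := by linarith [hdav, hv0]
        have hσnne : σn ≠ 0 := ne_of_gt hsn
        have hnn : (0:ℝ) ≤ (σn - σp)/σn := div_nonneg (by linarith [hdav, hv0]) (le_of_lt hsn)
        refine ⟨Sum.elim
            (fun l => if d l < 0 then c l * ((σn - σp)/σn) else if d l ≤ 0 then c l else 0)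
            (fun uw => if 0 < d uw.1 ∧ d uw.2 < 0 then c uw.1 * c uw.2 / σn else 0), ?_, ?_⟩
        · rintro (l | uw)
          · simp only [Sum.elim_inl]
            split
            · exact mul_nonneg (hc l) hnn
            · split
              exacts [hc l, le_refl 0]
          · simp only [Sum.elim_inr]
            split
            · exact div_nonneg (mul_nonneg (hc _) (hc _)) (le_of_lt hsn)
            · exact le_refl 0
        · rw [Fintype.sum_sum_type]
          simp only [Sum.elim_inl, Sum.elim_inr, hinl, hinr]
          have hsum_inl : (∑ l : Fin N,
              (if d l < 0 then c l * ((σn - σp)/σn) else if d l ≤ 0 then c l else 0) •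
                (if d l ≤ 0 then g l else 0)) = ((σn - σp)/σn) • SN + SZ := by
            have hterm : ∀ l : Fin N,
                (if d l < 0 then c l * ((σn - σp)/σn) else if d l ≤ 0 then c l else 0) •
                  (if d l ≤ 0 then g l else 0)
                = (if d l < 0 then ((σn - σp)/σn) • (c l • g l)
                   else if ¬ 0 < d l ∧ ¬ d l < 0 then c l • g l else 0) := by
              intro l
              by_cases h1 : d l < 0
              · simp only [if_pos h1, if_pos (le_of_lt h1), smul_smul]
                congr 1
                ring
              · by_cases h2 : d l ≤ 0
                · have h3 : ¬ 0 < d l ∧ ¬ d l < 0 := ⟨not_lt.mpr h2, h1⟩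
                  simp only [if_neg h1, if_pos h2, if_pos h3]
                · have h3 : ¬ (¬ 0 < d l ∧ ¬ d l < 0) := fun h4 => h2 (not_lt.mp h4.1)
                  simp only [if_neg h1, if_neg h2, if_neg h3, zero_smul]
            rw [Finset.sum_congr rfl (fun l _ => hterm l)]
            rw [← Finset.sum_filter_add_sum_filter_not Finset.univ (fun l => d l < 0)]
            congr 1
            · rw [Finset.sum_congr rfl (fun l hl => if_pos (Finset.mem_filter.mp hl).2),
                ← Finset.smul_sum]
            · rw [Finset.sum_congr rfl (fun l hl => if_neg (Finset.mem_filter.mp hl).2)]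
              rw [Finset.sum_ite, Finset.sum_const_zero, add_zero, Finset.filter_filter]
              apply Finset.sum_congr _ (fun _ _ => rfl)
              apply Finset.filter_congr
              intro l _
              constructor
              · exact fun h' => h'.2
              · exact fun h' => ⟨h'.2, h'⟩
          have hsum_inr : (∑ uw : Fin N × Fin N,
              (if 0 < d uw.1 ∧ d uw.2 < 0 then c uw.1 * c uw.2 / σn else 0) •
                (if 0 < d uw.1 ∧ d uw.2 < 0 then
                  d uw.1 • g uw.2 + (-(d uw.2)) • g uw.1 else 0))
              = (σp/σn) • SN + SP := by
            have hmem : ∀ uw : Fin N × Fin N, uw ∈ Pf ×ˢ Nf ↔ (0 < d uw.1 ∧ d uw.2 < 0) := by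
              intro uw
              simp [Finset.mem_product, hPf, hNf]
            have hterm : ∀ uw : Fin N × Fin N,
                (if 0 < d uw.1 ∧ d uw.2 < 0 then c uw.1 * c uw.2 / σn else 0) •
                  (if 0 < d uw.1 ∧ d uw.2 < 0 then
                    d uw.1 • g uw.2 + (-(d uw.2)) • g uw.1 else 0)
                = (if uw ∈ Pf ×ˢ Nf then
                    (c uw.1 * c uw.2 / σn) • (d uw.1 • g uw.2 + (-(d uw.2)) • g uw.1) else 0) := by
              intro uw
              by_cases hcond : 0 < d uw.1 ∧ d uw.2 < 0
              · rw [if_pos hcond, if_pos hcond, if_pos ((hmem uw).mpr hcond)]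
              · rw [if_neg hcond, if_neg hcond, if_neg (fun hm => hcond ((hmem uw).mp hm)),
                  zero_smul]
            rw [Finset.sum_congr rfl (fun uw _ => hterm uw), Finset.sum_ite_mem,
              Finset.univ_inter, Finset.sum_product]
            have hrow : ∀ u ∈ Pf, (∑ w ∈ Nf,
                (c u * c w / σn) • (d u • g w + (-(d w)) • g u))
                = (c u * d u / σn) • SN + c u • g u := by
              intro u _
              have : ∀ w ∈ Nf, (c u * c w / σn) • (d u • g w + (-(d w)) • g u)
                  = (c u * d u / σn) • (c w • g w) + (c w * (-(d w)) / σn) • (c u • g u) := by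
                intro w _
                rw [smul_add, smul_smul, smul_smul, smul_smul, smul_smul]
                congr 1
                · congr 1
                  ring
                · congr 1
                  ring
              rw [Finset.sum_congr rfl this, Finset.sum_add_distrib, ← Finset.smul_sum,
                ← Finset.sum_smul]
              congr 1
              have hone : (∑ w ∈ Nf, c w * (-(d w)) / σn) = 1 := by
                rw [← Finset.sum_div]
                rw [show (∑ w ∈ Nf, c w * (-(d w))) = σn by
                  rw [hσn, ← Finset.sum_neg_distrib]
                  exact Finset.sum_congr rfl (fun w _ => by ring)]
                exact div_self hσnne
              rw [hone, one_smul]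
            rw [Finset.sum_congr rfl hrow, Finset.sum_add_distrib, ← Finset.sum_smul,
              ← Finset.sum_div, ← hσp, ← hSP]
          rw [hsum_inl, hsum_inr, hvPNZ]
          have hco : ((σn - σp)/σn) • SN + (σp/σn) • SN = SN := by
            rw [← add_smul, ← add_div]
            rw [show σn - σp + σp = σn by ring, div_self hσnne, one_smul]
          obtain ⟨X, hX⟩ : ∃ X, ((σn - σp)/σn) • SN = X := ⟨_, rfl⟩
          obtain ⟨Y, hY⟩ : ∃ Y, (σp/σn) • SN = Y := ⟨_, rfl⟩
          rw [hX, hY] at hco ⊢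
          rw [← hco]
          abel

end SCGAux
namespace SCGAux

variable {n m mH : ℕ}

def rowP (A : Matrix (Fin m) (Fin n) ℤ) (x : Fin n → ℝ) : Fin m → ℝ :=
  fun i => ∑ j, (A i j : ℝ) * x j

def aRowF (A : Matrix (Fin m) (Fin n) ℤ) (l : Fin m → ℝ) : Fin n → ℝ :=
  fun j => ∑ i, l i * (A i j : ℝ)

def bValF (b : Fin m → ℤ) (l : Fin m → ℝ) : ℝ := ∑ i, l i * (b i : ℝ)

def HsetF (CH : Matrix (Fin mH) (Fin n) ℚ) (cH dH : Fin mH → ℚ) : Set ((Fin n → ℝ) × ℝ) :=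
  {p | ∀ i, ∑ j, (CH i j : ℝ) * p.1 j + (cH i : ℝ) * p.2 ≤ (dH i : ℝ)}

def LamSet (A : Matrix (Fin m) (Fin n) ℤ) (b : Fin m → ℤ) (CH : Matrix (Fin mH) (Fin n) ℚ)
    (cH dH : Fin mH → ℚ) (S' : Finset (Fin n → ℤ)) (I : Finset (Fin m))
    (T : Finset (Fin n → ℤ)) (z₀ : Fin n → ℤ) : Set (Fin m → ℝ) :=
  {l | z₀ ∈ T ∧ T ⊆ S' ∧
    (∃ x : Fin n → ℝ, (∀ i, rowP A x i ≤ (b i : ℝ)) ∧ ∀ i ∈ I, rowP A x i = (b i : ℝ)) ∧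
    (∀ i, 0 ≤ l i) ∧ (∀ i, i ∉ I → l i = 0) ∧
    (∃ α : Fin n → ℤ, ∀ j, (α j : ℝ) = aRowF A l j) ∧
    (aRowF A l, bValF b l) ∈ HsetF CH cH dH ∧
    (∀ s ∈ T, ∑ j, aRowF A l j * (s j : ℝ) ≤ bValF b l) ∧
    (∀ s ∈ S', s ∉ T → bValF b l < ∑ j, aRowF A l j * (s j : ℝ)) ∧
    (∀ s ∈ T, ∑ j, aRowF A l j * (s j : ℝ) ≤ ∑ j, aRowF A l j * (z₀ j : ℝ))}

def YSet (A : Matrix (Fin m) (Fin n) ℤ) (b : Fin m → ℤ) (CH : Matrix (Fin mH) (Fin n) ℚ)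
    (cH dH : Fin mH → ℚ) (S' : Finset (Fin n → ℤ)) (I : Finset (Fin m))
    (T : Finset (Fin n → ℤ)) (z₀ : Fin n → ℤ) : Set (Fin n → ℝ) :=
  {x | ∀ l ∈ LamSet A b CH cH dH S' I T z₀,
    ∑ i, l i * rowP A x i ≤ ∑ i, l i * rowP A (coeZR z₀) i}

lemma swap_sum (A : Matrix (Fin m) (Fin n) ℤ) (l : Fin m → ℝ) (x : Fin n → ℝ) :
    ∑ j, aRowF A l j * x j = ∑ i, l i * rowP A x i := by
  simp only [aRowF, rowP, Finset.sum_mul, Finset.mul_sum]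
  rw [Finset.sum_comm]
  exact Finset.sum_congr rfl fun i _ => Finset.sum_congr rfl fun j _ => by ring

lemma dotIR_eq (A : Matrix (Fin m) (Fin n) ℤ) {l : Fin m → ℝ} {α : Fin n → ℤ}
    (hα : ∀ j, (α j : ℝ) = aRowF A l j) (x : Fin n → ℝ) :
    dotIR α x = ∑ i, l i * rowP A x i := by
  rw [← swap_sum]
  exact Finset.sum_congr rfl fun j _ => by rw [hα j]

lemma dotIR_coe (α : Fin n → ℤ) (A : Matrix (Fin m) (Fin n) ℤ) {l : Fin m → ℝ}
    (hα : ∀ j, (α j : ℝ) = aRowF A l j) (z : Fin n → ℤ) :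
    dotIR α (coeZR z) = ∑ j, aRowF A l j * (z j : ℝ) := by
  exact Finset.sum_congr rfl fun j _ => by rw [hα j]; rfl

lemma aRowF_comb (A : Matrix (Fin m) (Fin n) ℤ) (l1 l2 : Fin m → ℝ) (t : ℝ) (j : Fin n) :
    aRowF A (fun i => l1 i + t * l2 i) j = aRowF A l1 j + t * aRowF A l2 j := by
  simp only [aRowF, add_mul, Finset.sum_add_distrib, Finset.mul_sum]
  congr 1
  exact Finset.sum_congr rfl fun i _ => by ring

lemma bValF_comb (b : Fin m → ℤ) (l1 l2 : Fin m → ℝ) (t : ℝ) :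
    bValF b (fun i => l1 i + t * l2 i) = bValF b l1 + t * bValF b l2 := by
  simp only [bValF, add_mul, Finset.sum_add_distrib, Finset.mul_sum]
  congr 1
  exact Finset.sum_congr rfl fun i _ => by ring

lemma dd_fintype {p : ℕ} {ι : Type*} [Fintype ι] (M : ι → Fin p → ℝ) (hM : ∀ j, QVec (M j)) :
    ∃ (N : ℕ) (g : Fin N → Fin p → ℝ), (∀ l, QVec (g l)) ∧
      (∀ l j, dotP (M j) (g l) ≤ 0) ∧
      ∀ v, (∀ j, dotP (M j) v ≤ 0) ↔
        ∃ c : Fin N → ℝ, (∀ l, 0 ≤ c l) ∧ v = ∑ l, c l • g l := by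
  classical
  obtain ⟨N, g, h1, h2, h3⟩ := dd (fun j' => M ((Fintype.equivFin ι).symm j'))
    (fun j' => hM _)
  refine ⟨N, g, h1, fun l j => ?_, fun v => ?_⟩
  · have := h2 l ((Fintype.equivFin ι) j)
    simpa using this
  · rw [← h3 v]
    constructor
    · exact fun h j' => h _
    · intro h j
      have := h ((Fintype.equivFin ι) j)
      simpa using this

/-- row index type -/
abbrev RowIdx (m mH : ℕ) (S' T : Finset (Fin n → ℤ)) : Type :=
  Fin m ⊕ Fin m ⊕ Fin mH ⊕ Unit ⊕ {s // s ∈ T} ⊕ {s // s ∈ S' \ T} ⊕ {s // s ∈ T}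

def rowsQT (A : Matrix (Fin m) (Fin n) ℤ) (b : Fin m → ℤ) (CH : Matrix (Fin mH) (Fin n) ℚ)
    (cH dH : Fin mH → ℚ) (S' : Finset (Fin n → ℤ)) (I : Finset (Fin m))
    (T : Finset (Fin n → ℤ)) (z₀ : Fin n → ℤ) : RowIdx m mH S' T → Fin (m+1) → ℝ :=
  fun j' => match j' with
  | .inl i => fun i' => if i' = Fin.castSucc i then (-1 : ℝ) else 0
  | .inr (.inl i) => if i ∈ I then 0 else fun i' => if i' = Fin.castSucc i then (1:ℝ) else 0
  | .inr (.inr (.inl iH)) =>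
      Fin.snoc (fun i => ∑ j, (CH iH j : ℝ) * (A i j : ℝ) + (cH iH : ℝ) * (b i : ℝ))
        (-(dH iH : ℝ))
  | .inr (.inr (.inr (.inl _))) => fun i' => if i' = Fin.last m then (-1:ℝ) else 0
  | .inr (.inr (.inr (.inr (.inl s)))) =>
      Fin.snoc (fun i => (∑ j, (A i j : ℝ) * (s.1 j : ℝ)) - (b i : ℝ)) 0
  | .inr (.inr (.inr (.inr (.inr (.inl s))))) =>
      Fin.snoc (fun i => (b i : ℝ) - ∑ j, (A i j : ℝ) * (s.1 j : ℝ)) 0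
  | .inr (.inr (.inr (.inr (.inr (.inr s))))) =>
      Fin.snoc (fun i => (∑ j, (A i j : ℝ) * (s.1 j : ℝ)) - ∑ j, (A i j : ℝ) * (z₀ j : ℝ)) 0

lemma qvec_unit {p' : ℕ} (t : Fin p') (c : ℝ) (q : ℚ) (h : c = (q : ℝ)) :
    QVec (fun i' => if i' = t then c else 0) :=
  ⟨fun i' => if i' = t then q else 0, fun i' => by by_cases h' : i' = t <;> simp [h', h]⟩

lemma qvec_snoc {m' : ℕ} (f : Fin m' → ℝ) (x : ℝ) (qf : Fin m' → ℚ) (qx : ℚ)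
    (hf : ∀ i, f i = (qf i : ℝ)) (hx : x = (qx : ℝ)) : QVec (Fin.snoc f x) := by
  refine ⟨Fin.snoc qf qx, fun i' => ?_⟩
  induction i' using Fin.lastCases with
  | last => simp [Fin.snoc_last, hx]
  | cast i => simp [Fin.snoc_castSucc, hf]

lemma rowsQT_QVec (A : Matrix (Fin m) (Fin n) ℤ) (b : Fin m → ℤ)
    (CH : Matrix (Fin mH) (Fin n) ℚ) (cH dH : Fin mH → ℚ) (S' : Finset (Fin n → ℤ))
    (I : Finset (Fin m)) (T : Finset (Fin n → ℤ)) (z₀ : Fin n → ℤ) :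
    ∀ j', QVec (rowsQT A b CH cH dH S' I T z₀ j') := by
  rintro (i | i | iH | u | s | s | s)
  · exact qvec_unit (Fin.castSucc i) (-1) (-1) (by norm_num)
  · show QVec (if i ∈ I then 0 else fun i' => if i' = Fin.castSucc i then (1:ℝ) else 0)
    split
    · exact QVec.zero
    · exact qvec_unit (Fin.castSucc i) 1 1 (by norm_num)
  · show QVec (Fin.snoc
        (fun i => ∑ j, (CH iH j : ℝ) * (A i j : ℝ) + (cH iH : ℝ) * (b i : ℝ)) (-(dH iH : ℝ)))
    exact qvec_snoc _ _ (fun i => ∑ j, CH iH j * (A i j : ℚ) + cH iH * (b i : ℚ)) (-(dH iH))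
      (fun i => by push_cast; ring) (by push_cast; ring)
  · exact qvec_unit (Fin.last m) (-1) (-1) (by norm_num)
  · show QVec (Fin.snoc (fun i => (∑ j, (A i j : ℝ) * (s.1 j : ℝ)) - (b i : ℝ)) 0)
    exact qvec_snoc _ _ (fun i => (∑ j, (A i j : ℚ) * (s.1 j : ℚ)) - (b i : ℚ)) 0
      (fun i => by push_cast; ring) (by norm_num)
  · show QVec (Fin.snoc (fun i => (b i : ℝ) - ∑ j, (A i j : ℝ) * (s.1 j : ℝ)) 0)
    exact qvec_snoc _ _ (fun i => (b i : ℚ) - ∑ j, (A i j : ℚ) * (s.1 j : ℚ)) 0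
      (fun i => by push_cast; ring) (by norm_num)
  · show QVec (Fin.snoc
        (fun i => (∑ j, (A i j : ℝ) * (s.1 j : ℝ)) - ∑ j, (A i j : ℝ) * (z₀ j : ℝ)) 0)
    exact qvec_snoc _ _
      (fun i => (∑ j, (A i j : ℚ) * (s.1 j : ℚ)) - ∑ j, (A i j : ℚ) * (z₀ j : ℚ)) 0
      (fun i => by push_cast; ring) (by norm_num)

lemma dotP_snoc {m' : ℕ} (f : Fin m' → ℝ) (x : ℝ) (v : Fin (m'+1) → ℝ) :
    dotP (Fin.snoc f x) v = (∑ i, f i * v (Fin.castSucc i)) + x * v (Fin.last m') := by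
  rw [dotP, Fin.sum_univ_castSucc]
  simp [Fin.snoc_castSucc, Fin.snoc_last]

lemma dotP_unit {p' : ℕ} (t : Fin p') (c : ℝ) (v : Fin p' → ℝ) :
    dotP (fun i' => if i' = t then c else 0) v = c * v t := by
  rw [dotP]
  simp [ite_mul, zero_mul, Finset.sum_ite_eq']

end SCGAux
namespace SCGAux

variable {n m mH : ℕ}

lemma dotP_zero_left {p' : ℕ} (v : Fin p' → ℝ) : dotP (0 : Fin p' → ℝ) v = 0 := by
  simp [dotP]

lemma mem_X_iff (A : Matrix (Fin m) (Fin n) ℤ) (b : Fin m → ℤ)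
    (CH : Matrix (Fin mH) (Fin n) ℚ) (cH dH : Fin mH → ℚ) (S' : Finset (Fin n → ℤ))
    (I : Finset (Fin m)) (T : Finset (Fin n → ℤ)) (z₀ : Fin n → ℤ) (v : Fin (m+1) → ℝ) :
    (∀ j', dotP (rowsQT A b CH cH dH S' I T z₀ j') v ≤ 0) ↔
      ((∀ i, 0 ≤ v (Fin.castSucc i)) ∧
       (∀ i, i ∉ I → v (Fin.castSucc i) ≤ 0) ∧
       (∀ iH, ∑ j, (CH iH j : ℝ) * aRowF A (fun i => v (Fin.castSucc i)) j
           + (cH iH : ℝ) * bValF b (fun i => v (Fin.castSucc i))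
           ≤ (dH iH : ℝ) * v (Fin.last m)) ∧
       (0 ≤ v (Fin.last m)) ∧
       (∀ s ∈ T, ∑ j, aRowF A (fun i => v (Fin.castSucc i)) j * (s j : ℝ)
           ≤ bValF b (fun i => v (Fin.castSucc i))) ∧
       (∀ s ∈ S' \ T, bValF b (fun i => v (Fin.castSucc i))
           ≤ ∑ j, aRowF A (fun i => v (Fin.castSucc i)) j * (s j : ℝ)) ∧
       (∀ s ∈ T, ∑ j, aRowF A (fun i => v (Fin.castSucc i)) j * (s j : ℝ)
           ≤ ∑ j, aRowF A (fun i => v (Fin.castSucc i)) j * (z₀ j : ℝ))) := by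
  have hswap : ∀ (w : Fin m → Fin n → ℝ),
      ∑ i, (∑ j, w i j) * v (Fin.castSucc i) = ∑ j, ∑ i, w i j * v (Fin.castSucc i) := by
    intro w
    rw [Finset.sum_comm]
    exact Finset.sum_congr rfl fun i _ => by rw [Finset.sum_mul]
  have hid3 : ∀ iH, ∑ i, (∑ j, (CH iH j : ℝ) * (A i j : ℝ) + (cH iH : ℝ) * (b i : ℝ))
        * v (Fin.castSucc i)
      = ∑ j, (CH iH j : ℝ) * aRowF A (fun i => v (Fin.castSucc i)) j
        + (cH iH : ℝ) * bValF b (fun i => v (Fin.castSucc i)) := by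
    intro iH
    have h1 : ∀ i, (∑ j, (CH iH j : ℝ) * (A i j : ℝ) + (cH iH : ℝ) * (b i : ℝ))
          * v (Fin.castSucc i)
        = (∑ j, (CH iH j : ℝ) * (A i j : ℝ)) * v (Fin.castSucc i)
          + (cH iH : ℝ) * (b i : ℝ) * v (Fin.castSucc i) := fun i => by ring
    rw [Finset.sum_congr rfl (fun i _ => h1 i), Finset.sum_add_distrib,
      hswap (fun i j => (CH iH j : ℝ) * (A i j : ℝ))]
    congr 1
    · refine Finset.sum_congr rfl fun j _ => ?_
      rw [aRowF, Finset.mul_sum]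
      exact Finset.sum_congr rfl fun i _ => by ring
    · rw [bValF, Finset.mul_sum]
      exact Finset.sum_congr rfl fun i _ => by ring
  have hid5 : ∀ s : Fin n → ℤ,
      ∑ i, ((∑ j, (A i j : ℝ) * (s j : ℝ)) - (b i : ℝ)) * v (Fin.castSucc i)
      = (∑ j, aRowF A (fun i => v (Fin.castSucc i)) j * (s j : ℝ))
        - bValF b (fun i => v (Fin.castSucc i)) := by
    intro s
    have h1 : ∀ i, ((∑ j, (A i j : ℝ) * (s j : ℝ)) - (b i : ℝ)) * v (Fin.castSucc i)
        = (∑ j, (A i j : ℝ) * (s j : ℝ)) * v (Fin.castSucc i)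
          - (b i : ℝ) * v (Fin.castSucc i) := fun i => by ring
    rw [Finset.sum_congr rfl (fun i _ => h1 i), Finset.sum_sub_distrib,
      hswap (fun i j => (A i j : ℝ) * (s j : ℝ))]
    congr 1
    · refine Finset.sum_congr rfl fun j _ => ?_
      rw [aRowF, Finset.sum_mul]
      exact Finset.sum_congr rfl fun i _ => by ring
    · rw [bValF]
      exact Finset.sum_congr rfl fun i _ => by ring
  have hid7 : ∀ s : Fin n → ℤ,
      ∑ i, ((∑ j, (A i j : ℝ) * (s j : ℝ)) - ∑ j, (A i j : ℝ) * (z₀ j : ℝ))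
        * v (Fin.castSucc i)
      = (∑ j, aRowF A (fun i => v (Fin.castSucc i)) j * (s j : ℝ))
        - ∑ j, aRowF A (fun i => v (Fin.castSucc i)) j * (z₀ j : ℝ) := by
    intro s
    have h1 : ∀ i, ((∑ j, (A i j : ℝ) * (s j : ℝ)) - ∑ j, (A i j : ℝ) * (z₀ j : ℝ))
        * v (Fin.castSucc i)
        = (∑ j, (A i j : ℝ) * (s j : ℝ)) * v (Fin.castSucc i)
          - (∑ j, (A i j : ℝ) * (z₀ j : ℝ)) * v (Fin.castSucc i) := fun i => by ring
    rw [Finset.sum_congr rfl (fun i _ => h1 i), Finset.sum_sub_distrib,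
      hswap (fun i j => (A i j : ℝ) * (s j : ℝ)),
      hswap (fun i j => (A i j : ℝ) * (z₀ j : ℝ))]
    congr 1
    · refine Finset.sum_congr rfl fun j _ => ?_
      rw [aRowF, Finset.sum_mul]
      exact Finset.sum_congr rfl fun i _ => by ring
    · refine Finset.sum_congr rfl fun j _ => ?_
      rw [aRowF, Finset.sum_mul]
      exact Finset.sum_congr rfl fun i _ => by ring
  have hd1 : ∀ i : Fin m, dotP (rowsQT A b CH cH dH S' I T z₀ (Sum.inl i)) v
      = -(v (Fin.castSucc i)) := fun i => by
    rw [show rowsQT A b CH cH dH S' I T z₀ (Sum.inl i)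
        = (fun i' => if i' = Fin.castSucc i then (-1:ℝ) else 0) from rfl, dotP_unit]
    ring
  have hd3 : ∀ iH, dotP (rowsQT A b CH cH dH S' I T z₀ (Sum.inr (Sum.inr (Sum.inl iH)))) v
      = (∑ j, (CH iH j : ℝ) * aRowF A (fun i => v (Fin.castSucc i)) j
          + (cH iH : ℝ) * bValF b (fun i => v (Fin.castSucc i)))
        - (dH iH : ℝ) * v (Fin.last m) := fun iH => by
    rw [show rowsQT A b CH cH dH S' I T z₀ (Sum.inr (Sum.inr (Sum.inl iH)))
        = Fin.snoc (fun i => ∑ j, (CH iH j : ℝ) * (A i j : ℝ) + (cH iH : ℝ) * (b i : ℝ))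
          (-(dH iH : ℝ)) from rfl, dotP_snoc, hid3 iH]
    ring
  have hd4 : dotP (rowsQT A b CH cH dH S' I T z₀ (Sum.inr (Sum.inr (Sum.inr (Sum.inl ()))))) v
      = -(v (Fin.last m)) := by
    rw [show rowsQT A b CH cH dH S' I T z₀ (Sum.inr (Sum.inr (Sum.inr (Sum.inl ()))))
        = (fun i' => if i' = Fin.last m then (-1:ℝ) else 0) from rfl, dotP_unit]
    ring
  have hd5 : ∀ s : {s // s ∈ T},
      dotP (rowsQT A b CH cH dH S' I T z₀ (Sum.inr (Sum.inr (Sum.inr (Sum.inr (Sum.inl s)))))) v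
      = (∑ j, aRowF A (fun i => v (Fin.castSucc i)) j * (s.1 j : ℝ))
        - bValF b (fun i => v (Fin.castSucc i)) := fun s => by
    rw [show rowsQT A b CH cH dH S' I T z₀ (Sum.inr (Sum.inr (Sum.inr (Sum.inr (Sum.inl s)))))
        = Fin.snoc (fun i => (∑ j, (A i j : ℝ) * (s.1 j : ℝ)) - (b i : ℝ)) 0 from rfl,
      dotP_snoc, hid5 s.1]
    ring
  have hd6 : ∀ s : {s // s ∈ S' \ T},
      dotP (rowsQT A b CH cH dH S' I T z₀
        (Sum.inr (Sum.inr (Sum.inr (Sum.inr (Sum.inr (Sum.inl s))))))) v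
      = bValF b (fun i => v (Fin.castSucc i))
        - (∑ j, aRowF A (fun i => v (Fin.castSucc i)) j * (s.1 j : ℝ)) := fun s => by
    rw [show rowsQT A b CH cH dH S' I T z₀
          (Sum.inr (Sum.inr (Sum.inr (Sum.inr (Sum.inr (Sum.inl s))))))
        = Fin.snoc (fun i => (b i : ℝ) - ∑ j, (A i j : ℝ) * (s.1 j : ℝ)) 0 from rfl, dotP_snoc]
    have h1 : ∀ i, ((b i : ℝ) - ∑ j, (A i j : ℝ) * (s.1 j : ℝ)) * v (Fin.castSucc i)
        = -(((∑ j, (A i j : ℝ) * (s.1 j : ℝ)) - (b i : ℝ)) * v (Fin.castSucc i)) :=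
      fun i => by ring
    rw [Finset.sum_congr rfl (fun i _ => h1 i), Finset.sum_neg_distrib, hid5 s.1]
    ring
  have hd7 : ∀ s : {s // s ∈ T},
      dotP (rowsQT A b CH cH dH S' I T z₀
        (Sum.inr (Sum.inr (Sum.inr (Sum.inr (Sum.inr (Sum.inr s))))))) v
      = (∑ j, aRowF A (fun i => v (Fin.castSucc i)) j * (s.1 j : ℝ))
        - ∑ j, aRowF A (fun i => v (Fin.castSucc i)) j * (z₀ j : ℝ) := fun s => by
    rw [show rowsQT A b CH cH dH S' I T z₀
          (Sum.inr (Sum.inr (Sum.inr (Sum.inr (Sum.inr (Sum.inr s))))))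
        = Fin.snoc (fun i => (∑ j, (A i j : ℝ) * (s.1 j : ℝ))
            - ∑ j, (A i j : ℝ) * (z₀ j : ℝ)) 0 from rfl, dotP_snoc, hid7 s.1]
    ring
  constructor
  · intro hX
    refine ⟨fun i => ?_, fun i hi => ?_, fun iH => ?_, ?_, fun s hs => ?_, fun s hs => ?_,
      fun s hs => ?_⟩
    · have := hX (Sum.inl i); rw [hd1 i] at this; linarith
    · have := hX (Sum.inr (Sum.inl i))
      rw [show rowsQT A b CH cH dH S' I T z₀ (Sum.inr (Sum.inl i))
          = (if i ∈ I then 0 else fun i' => if i' = Fin.castSucc i then (1:ℝ) else 0)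
          from rfl, if_neg hi, dotP_unit] at this
      linarith
    · have := hX (Sum.inr (Sum.inr (Sum.inl iH))); rw [hd3 iH] at this; linarith
    · have := hX (Sum.inr (Sum.inr (Sum.inr (Sum.inl ())))); rw [hd4] at this; linarith
    · have := hX (Sum.inr (Sum.inr (Sum.inr (Sum.inr (Sum.inl ⟨s, hs⟩)))))
      rw [hd5 ⟨s, hs⟩] at this; linarith
    · have := hX (Sum.inr (Sum.inr (Sum.inr (Sum.inr (Sum.inr (Sum.inl ⟨s, hs⟩))))))
      rw [hd6 ⟨s, hs⟩] at this; linarith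
    · have := hX (Sum.inr (Sum.inr (Sum.inr (Sum.inr (Sum.inr (Sum.inr ⟨s, hs⟩))))))
      rw [hd7 ⟨s, hs⟩] at this; linarith
  · rintro ⟨h1, h2, h3, h4, h5, h6, h7⟩ (i | i | iH | u | s | s | s)
    · rw [hd1 i]; linarith [h1 i]
    · by_cases hi : i ∈ I
      · rw [show rowsQT A b CH cH dH S' I T z₀ (Sum.inr (Sum.inl i))
            = (if i ∈ I then 0 else fun i' => if i' = Fin.castSucc i then (1:ℝ) else 0)
            from rfl, if_pos hi, dotP_zero_left]
      · rw [show rowsQT A b CH cH dH S' I T z₀ (Sum.inr (Sum.inl i))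
            = (if i ∈ I then 0 else fun i' => if i' = Fin.castSucc i then (1:ℝ) else 0)
            from rfl, if_neg hi, dotP_unit]
        have := h2 i hi; linarith
    · rw [hd3 iH]; have := h3 iH; linarith
    · rw [hd4]; linarith
    · rw [hd5 s]; have := h5 s.1 s.2; linarith
    · rw [hd6 s]; have := h6 s.1 s.2; linarith
    · rw [hd7 s]; have := h7 s.1 s.2; linarith

end SCGAux
namespace SCGAux

variable {n m mH : ℕ}

def cvecQF (A : Matrix (Fin m) (Fin n) ℤ) (gr : Fin (m+1) → ℚ) : Fin n → ℚ :=
  fun j => ∑ i, gr (Fin.castSucc i) * (A i j : ℚ)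

def rhsQF (A : Matrix (Fin m) (Fin n) ℤ) (z₀ : Fin n → ℤ) (gr : Fin (m+1) → ℚ) : ℚ :=
  ∑ j, cvecQF A gr j * (z₀ j : ℚ)

lemma gamma_dot (A : Matrix (Fin m) (Fin n) ℤ) (g : Fin (m+1) → ℝ) (gr : Fin (m+1) → ℚ)
    (hgq : ∀ i, g i = (gr i : ℝ)) (y : Fin n → ℝ) :
    ∑ i, g (Fin.castSucc i) * rowP A y i = ∑ j, ((cvecQF A gr j : ℚ) : ℝ) * y j := by
  simp only [rowP, cvecQF, Finset.mul_sum]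
  rw [Finset.sum_comm]
  refine Finset.sum_congr rfl fun j _ => ?_
  push_cast
  rw [Finset.sum_mul]
  exact Finset.sum_congr rfl fun i _ => by rw [hgq]; ring

lemma rhsQF_cast (A : Matrix (Fin m) (Fin n) ℤ) (z₀ : Fin n → ℤ) (gr : Fin (m+1) → ℚ) :
    ((rhsQF A z₀ gr : ℚ) : ℝ) = ∑ j, ((cvecQF A gr j : ℚ) : ℝ) * coeZR z₀ j := by
  simp only [rhsQF, coeZR]
  push_cast
  rfl

set_option maxHeartbeats 2000000 in
lemma YSet_RPF (A : Matrix (Fin m) (Fin n) ℤ) (b : Fin m → ℤ)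
    (CH : Matrix (Fin mH) (Fin n) ℚ) (cH dH : Fin mH → ℚ) (S' : Finset (Fin n → ℤ))
    (I : Finset (Fin m)) (T : Finset (Fin n → ℤ)) (z₀ : Fin n → ℤ)
    (hrec : HsetF CH cH dH ⊆ recConePair (HsetF CH cH dH)) :
    RPF (YSet A b CH cH dH S' I T z₀) := by
  classical
  by_cases hne : (LamSet A b CH cH dH S' I T z₀).Nonempty
  case neg =>
    have hY : YSet A b CH cH dH S' I T z₀ = Set.univ := by
      ext x
      simp only [YSet, Set.mem_setOf_eq, Set.mem_univ, iff_true]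
      intro l hl
      exact absurd ⟨l, hl⟩ hne
    rw [hY]
    exact RPF.univ
  obtain ⟨lh, hlh⟩ := hne
  obtain ⟨N, g, hQ, hgin, hggen⟩ := dd_fintype (rowsQT A b CH cH dH S' I T z₀)
    (rowsQT_QVec A b CH cH dH S' I T z₀)
  choose gq hgq using hQ
  have hYG : YSet A b CH cH dH S' I T z₀
      = {x | ∀ l, ∑ j, ((cvecQF A (gq l) j : ℚ) : ℝ) * x j ≤ ((rhsQF A z₀ (gq l) : ℚ) : ℝ)} := by
    apply Set.Subset.antisymm
    · -- Y ⊆ G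
      intro x hx l
      set γ : Fin m → ℝ := fun i => g l (Fin.castSucc i) with hγdef
      have hγq : ∀ i, γ i = ((gq l (Fin.castSucc i) : ℚ) : ℝ) := fun i => hgq l _
      have hfacts := (mem_X_iff A b CH cH dH S' I T z₀ (g l)).mp (hgin l)
      rw [← hγdef] at hfacts
      obtain ⟨hγ0, hγI, hγH, hγlast, hγT, hγGe, hγM⟩ := hfacts
      obtain ⟨N₀, hN₀pos, hzz⟩ := exists_int_multiple (cvecQF A (gq l))
      choose zz hzz' using hzz
      obtain ⟨hz₀T, hTS', hFI, hlh0, hlhI, ⟨αh, hαh⟩, hHmh, hTleh, hTstrh, hTmaxh⟩ := hlh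
      have hγA : ∀ j, aRowF A γ j = ((cvecQF A (gq l) j : ℚ) : ℝ) := by
        intro j
        simp only [aRowF, cvecQF]
        push_cast
        exact Finset.sum_congr rfl fun i _ => by rw [hγq i]
      -- membership of perturbed multipliers
      have hmem : ∀ k : ℕ,
          (fun i => lh i + ((k * N₀ : ℕ) : ℝ) * γ i) ∈ LamSet A b CH cH dH S' I T z₀ := by
        intro k
        have hκ0 : (0:ℝ) ≤ ((k * N₀ : ℕ) : ℝ) := Nat.cast_nonneg _
        set κ : ℝ := ((k * N₀ : ℕ) : ℝ) with hκdef
        have haR : ∀ j, aRowF A (fun i => lh i + κ * γ i) j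
            = aRowF A lh j + κ * aRowF A γ j := fun j => aRowF_comb A lh γ κ j
        have hbV : bValF b (fun i => lh i + κ * γ i) = bValF b lh + κ * bValF b γ :=
          bValF_comb b lh γ κ
        have hsum_s : ∀ s : Fin n → ℤ, ∑ j, aRowF A (fun i => lh i + κ * γ i) j * (s j : ℝ)
            = ∑ j, aRowF A lh j * (s j : ℝ) + κ * ∑ j, aRowF A γ j * (s j : ℝ) := by
          intro s
          rw [Finset.mul_sum, ← Finset.sum_add_distrib]
          refine Finset.sum_congr rfl fun j _ => ?_
          rw [haR j]
          ring
        refine ⟨hz₀T, hTS', hFI, ?_, ?_, ?_, ?_, ?_, ?_, ?_⟩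
        · exact fun i => add_nonneg (hlh0 i) (mul_nonneg hκ0 (hγ0 i))
        · intro i hi
          show lh i + κ * γ i = 0
          have hγz : γ i = 0 := le_antisymm (hγI i hi) (hγ0 i)
          rw [hlhI i hi, hγz]
          ring
        · refine ⟨fun j => αh j + (k : ℤ) * zz j, fun j => ?_⟩
          rw [haR j, ← hαh j, hγA j]
          have h2 : (N₀ : ℝ) * ((cvecQF A (gq l) j : ℚ) : ℝ) = ((zz j : ℤ) : ℝ) := by
            exact_mod_cast congrArg (fun q : ℚ => (q : ℝ)) (hzz' j)
          have h3 : κ = (k:ℝ) * (N₀:ℝ) := by rw [hκdef]; push_cast; ring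
          push_cast
          rw [h3, mul_assoc, h2]
        · -- H membership
          have hpair : ((aRowF A (fun i => lh i + κ * γ i), bValF b (fun i => lh i + κ * γ i))
                : (Fin n → ℝ) × ℝ)
              = (aRowF A lh, bValF b lh) + κ • (aRowF A γ, bValF b γ) := by
            rw [Prod.smul_mk, Prod.mk_add_mk]
            refine Prod.ext_iff.mpr ⟨?_, ?_⟩
            · funext j
              simp only [Pi.add_apply, Pi.smul_apply, smul_eq_mul]
              exact haR j
            · simp only [smul_eq_mul]
              exact hbV
          rw [hpair]
          by_cases hsl : g l (Fin.last m) = 0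
          · have hcomp : ((aRowF A lh, bValF b lh) + κ • (aRowF A γ, bValF b γ)
                : (Fin n → ℝ) × ℝ)
                = (aRowF A lh + κ • aRowF A γ, bValF b lh + κ * bValF b γ) := by
              rw [Prod.smul_mk, Prod.mk_add_mk, smul_eq_mul]
            rw [hcomp]
            intro iH
            have hγrow := hγH iH
            rw [hsl, mul_zero] at hγrow
            have hbase := hHmh iH
            show ∑ j, (CH iH j : ℝ) * (aRowF A lh + κ • aRowF A γ) j
                + (cH iH : ℝ) * (bValF b lh + κ * bValF b γ) ≤ (dH iH : ℝ)
            have hexp : ∑ j, (CH iH j : ℝ) * (aRowF A lh + κ • aRowF A γ) j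
                = ∑ j, (CH iH j : ℝ) * aRowF A lh j
                  + κ * ∑ j, (CH iH j : ℝ) * aRowF A γ j := by
              rw [Finset.mul_sum, ← Finset.sum_add_distrib]
              refine Finset.sum_congr rfl fun j _ => ?_
              simp only [Pi.add_apply, Pi.smul_apply, smul_eq_mul]
              ring
            rw [hexp]
            have hklt := mul_le_mul_of_nonneg_left hγrow hκ0
            rw [mul_zero] at hklt
            nlinarith [hbase, hklt]
          · have hslpos : 0 < g l (Fin.last m) := lt_of_le_of_ne hγlast (Ne.symm hsl)
            set sl := g l (Fin.last m) with hsldef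
            have hslne : sl ≠ 0 := ne_of_gt hslpos
            have hinv0 : (0:ℝ) ≤ sl⁻¹ := inv_nonneg.mpr (le_of_lt hslpos)
            have hu : ((sl⁻¹ • aRowF A γ, sl⁻¹ * bValF b γ) : (Fin n → ℝ) × ℝ)
                ∈ HsetF CH cH dH := by
              intro iH
              have hγrow := hγH iH
              have h5 := mul_le_mul_of_nonneg_left hγrow hinv0
              have hL : sl⁻¹ * (∑ j, (CH iH j:ℝ) * aRowF A γ j + (cH iH:ℝ) * bValF b γ)
                  = ∑ j, (CH iH j:ℝ) * (sl⁻¹ • aRowF A γ) j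
                    + (cH iH:ℝ) * (sl⁻¹ * bValF b γ) := by
                rw [mul_add, Finset.mul_sum]
                congr 1
                · refine Finset.sum_congr rfl fun j _ => ?_
                  simp only [Pi.smul_apply, smul_eq_mul]
                  ring
                · ring
              have hR : sl⁻¹ * ((dH iH:ℝ) * sl) = (dH iH:ℝ) := by
                field_simp
              rw [hL, hR] at h5
              exact h5
            have hstep := hrec hu (aRowF A lh, bValF b lh) hHmh (κ * sl)
              (mul_nonneg hκ0 (le_of_lt hslpos))
            have hcomb : ((aRowF A lh, bValF b lh) : (Fin n → ℝ) × ℝ)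
                + (κ * sl) • (sl⁻¹ • aRowF A γ, sl⁻¹ * bValF b γ)
                = (aRowF A lh, bValF b lh) + κ • (aRowF A γ, bValF b γ) := by
              congr 1
              rw [Prod.smul_mk, Prod.smul_mk]
              refine Prod.ext_iff.mpr ⟨?_, ?_⟩
              · rw [smul_smul, mul_inv_cancel_right₀ hslne]
              · rw [smul_eq_mul, smul_eq_mul]
                field_simp
            rw [hcomb] at hstep
            exact hstep
        · intro s hs
          rw [hsum_s s, hbV]
          exact add_le_add (hTleh s hs) (mul_le_mul_of_nonneg_left (hγT s hs) hκ0)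
        · intro s hs hsnT
          rw [hsum_s s, hbV]
          exact add_lt_add_of_lt_of_le (hTstrh s hs hsnT)
            (mul_le_mul_of_nonneg_left (hγGe s (Finset.mem_sdiff.mpr ⟨hs, hsnT⟩)) hκ0)
        · intro s hs
          rw [hsum_s s, hsum_s z₀]
          exact add_le_add (hTmaxh s hs) (mul_le_mul_of_nonneg_left (hγM s hs) hκ0)
      -- use YSet inequality for all k
      have hineq : ∀ k : ℕ,
          ∑ i, lh i * rowP A x i + ((k*N₀:ℕ):ℝ) * ∑ i, γ i * rowP A x i
          ≤ ∑ i, lh i * rowP A (coeZR z₀) i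
            + ((k*N₀:ℕ):ℝ) * ∑ i, γ i * rowP A (coeZR z₀) i := by
        intro k
        have h0 := hx _ (hmem k)
        have hexp : ∀ y : Fin n → ℝ, ∑ i, (lh i + ((k*N₀:ℕ):ℝ) * γ i) * rowP A y i
            = ∑ i, lh i * rowP A y i + ((k*N₀:ℕ):ℝ) * ∑ i, γ i * rowP A y i := by
          intro y
          rw [Finset.mul_sum, ← Finset.sum_add_distrib]
          exact Finset.sum_congr rfl fun i _ => by ring
        rw [hexp x, hexp (coeZR z₀)] at h0
        exact h0
      have hγineq : ∑ i, γ i * rowP A x i ≤ ∑ i, γ i * rowP A (coeZR z₀) i := by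
        by_contra hcon
        push_neg at hcon
        obtain ⟨k, hk⟩ := exists_nat_gt
          ((∑ i, lh i * rowP A (coeZR z₀) i - ∑ i, lh i * rowP A x i) /
            ((N₀:ℝ) * (∑ i, γ i * rowP A x i - ∑ i, γ i * rowP A (coeZR z₀) i)))
        have hN₀r : (0:ℝ) < (N₀:ℝ) := by exact_mod_cast hN₀pos
        have hwpos : 0 < ∑ i, γ i * rowP A x i - ∑ i, γ i * rowP A (coeZR z₀) i := by
          linarith
        have h2 := hineq k
        have h3 : ((k*N₀ : ℕ):ℝ) = (k:ℝ) * (N₀:ℝ) := by push_cast; ring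
        rw [h3] at h2
        rw [div_lt_iff₀ (by positivity)] at hk
        nlinarith [h2, hk]
      calc ∑ j, ((cvecQF A (gq l) j : ℚ) : ℝ) * x j
          = ∑ i, γ i * rowP A x i := (gamma_dot A (g l) (gq l) (hgq l) x).symm
        _ ≤ ∑ i, γ i * rowP A (coeZR z₀) i := hγineq
        _ = ∑ j, ((cvecQF A (gq l) j : ℚ) : ℝ) * coeZR z₀ j :=
            gamma_dot A (g l) (gq l) (hgq l) (coeZR z₀)
        _ = ((rhsQF A z₀ (gq l) : ℚ) : ℝ) := (rhsQF_cast A z₀ (gq l)).symm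
    · -- G ⊆ Y
      intro x hx l hl
      obtain ⟨hz₀T, hTS', hFI, hl0, hlI, hints, hHm, hTle, hTstr, hTmax⟩ := hl
      set v : Fin (m+1) → ℝ := Fin.snoc l 1 with hvdef
      have hvc : (fun i => v (Fin.castSucc i)) = l := funext fun i => by
        rw [hvdef]
        exact Fin.snoc_castSucc _ _ _
      have hvlast : v (Fin.last m) = 1 := Fin.snoc_last _ _
      have hvX : ∀ j', dotP (rowsQT A b CH cH dH S' I T z₀ j') v ≤ 0 := by
        have hvci : ∀ i, v (Fin.castSucc i) = l i := fun i => Fin.snoc_castSucc _ _ _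
        rw [mem_X_iff, hvc, hvlast]
        refine ⟨fun i => by rw [hvci i]; exact hl0 i,
          fun i hi => by rw [hvci i]; exact le_of_eq (hlI i hi), fun iH => ?_,
          by norm_num, hTle, fun s hs => le_of_lt
            (hTstr s (Finset.mem_sdiff.mp hs).1 (Finset.mem_sdiff.mp hs).2), hTmax⟩
        rw [mul_one]
        exact hHm iH
      obtain ⟨c, hc0, hcsum⟩ := (hggen v).mp hvX
      have hli : ∀ i, l i = ∑ l', c l' * g l' (Fin.castSucc i) := by
        intro i
        have h1 := congrFun hcsum (Fin.castSucc i)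
        have h2 : v (Fin.castSucc i) = l i := by
          rw [hvdef]
          exact Fin.snoc_castSucc _ _ _
        rw [h2] at h1
        rw [h1, Finset.sum_apply]
        exact Finset.sum_congr rfl fun l' _ => rfl
      have key : ∀ y : Fin n → ℝ,
          ∑ i, l i * rowP A y i = ∑ l', c l' * ∑ j, ((cvecQF A (gq l') j : ℚ) : ℝ) * y j := by
        intro y
        rw [Finset.sum_congr rfl (fun i (_ : i ∈ Finset.univ) => by
          rw [hli i, Finset.sum_mul])]
        rw [Finset.sum_comm]
        refine Finset.sum_congr rfl fun l' _ => ?_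
        rw [← gamma_dot A (g l') (gq l') (hgq l') y, Finset.mul_sum]
        exact Finset.sum_congr rfl fun i _ => by ring
      rw [key x, key (coeZR z₀)]
      refine Finset.sum_le_sum fun l' _ => ?_
      have h1 : ∑ j, ((cvecQF A (gq l') j : ℚ) : ℝ) * coeZR z₀ j
          = ((rhsQF A z₀ (gq l') : ℚ) : ℝ) := (rhsQF_cast A z₀ (gq l')).symm
      rw [h1]
      exact mul_le_mul_of_nonneg_left (hx l') (hc0 l')
  rw [hYG]
  refine ⟨Finset.image (fun l => (cvecQF A (gq l), rhsQF A z₀ (gq l))) Finset.univ, ?_⟩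
  ext x
  simp only [Set.mem_setOf_eq, Finset.mem_image]
  constructor
  · rintro hx f ⟨l, _, rfl⟩
    exact hx l
  · intro hx l
    exact hx _ ⟨l, Finset.mem_univ l, rfl⟩

end SCGAux

open SCGAux in
set_option maxHeartbeats 1000000 in
/-- Let `S` be a nonempty finite subset of `ℤ^n`, `P ⊆ ℝ^n` a nonempty
rational polyhedron, and `H ⊆ ℝ^n × ℝ` a rational polyhedron contained in its own
recession cone. With `Ω = Π_P ∩ H`, the set `P_{S,Ω}` is a rational polyhedron. -/
theorem scg_partial_closure_isRatPolyhedron_of_finite {n m mH : ℕ}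
    (S : Set (Fin n → ℤ)) (hSfin : S.Finite) (hSne : S.Nonempty)
    (A : Matrix (Fin m) (Fin n) ℤ) (b : Fin m → ℤ) (P : Set (Fin n → ℝ))
    (hP : P = {x | ∀ i, ∑ j, (A i j : ℝ) * x j ≤ (b i : ℝ)}) (hPne : P.Nonempty)
    (CH : Matrix (Fin mH) (Fin n) ℚ) (cH dH : Fin mH → ℚ) (H : Set ((Fin n → ℝ) × ℝ))
    (hH : H = {p | ∀ i, ∑ j, (CH i j : ℝ) * p.1 j + (cH i : ℝ) * p.2 ≤ (dH i : ℝ)})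
    (hHrec : H ⊆ recConePair H) :
    IsRatPolyhedron (closLe S {p ∈ PiLe A b P | (coeZR p.1, p.2) ∈ H}) := by
  classical
  set S' : Finset (Fin n → ℤ) := hSfin.toFinset with hS'def
  have hSS' : ∀ z, z ∈ S' ↔ z ∈ S := fun z => hSfin.mem_toFinset
  set Om : Set ((Fin n → ℤ) × ℝ) := {p ∈ PiLe A b P | (coeZR p.1, p.2) ∈ H} with hOmdef
  have hHeq : HsetF CH cH dH = H := hH.symm
  by_cases hec : ∃ p' ∈ Om, ¬∃ z ∈ S, dotIR p'.1 (coeZR z) ≤ p'.2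
  · obtain ⟨p', hp', hnz⟩ := hec
    have h1 : closLe S Om = ∅ := by
      rw [Set.eq_empty_iff_forall_notMem]
      intro x hx
      rw [closLe] at hx
      have hx' : x ∈ cutLe S p'.1 p'.2 := Set.mem_iInter₂.mp hx p' hp'
      rw [cutLe, if_neg hnz] at hx'
      exact hx'
    rw [h1]
    exact RPF.empty.isRatPolyhedron
  push_neg at hec
  set idx : Finset (Finset (Fin m) × Finset (Fin n → ℤ) × (Fin n → ℤ)) :=
    Finset.univ ×ˢ S'.powerset ×ˢ S' with hidxdef
  have hmain : closLe S Om = ⋂ q ∈ idx, YSet A b CH cH dH S' q.1 q.2.1 q.2.2 := by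
    apply Set.Subset.antisymm
    · intro x hx
      rw [closLe] at hx
      refine Set.mem_iInter₂.mpr ?_
      rintro ⟨I, T, z₀⟩ _
      simp only [YSet, Set.mem_setOf_eq]
      intro l hl
      obtain ⟨hz₀T, hTS', hFI, hl0, hlI, ⟨α, hα⟩, hHm, hTle, hTstr, hTmax⟩ := hl
      obtain ⟨xst, hxstP, hxstI⟩ := hFI
      have hxstP' : xst ∈ P := by
        rw [hP]
        exact fun i => hxstP i
      have hub : ∀ y ∈ P, dotIR α y ≤ bValF b l := by
        intro y hy
        rw [dotIR_eq A hα y]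
        rw [hP] at hy
        exact Finset.sum_le_sum fun i _ => mul_le_mul_of_nonneg_left (hy i) (hl0 i)
      have hval : dotIR α xst = bValF b l := by
        rw [dotIR_eq A hα xst]
        refine Finset.sum_congr rfl fun i _ => ?_
        by_cases hi : i ∈ I
        · rw [hxstI i hi]
        · rw [hlI i hi]
          ring
      have hPmem : ((α, bValF b l) : (Fin n → ℤ) × ℝ) ∈ PiLe A b P := by
        refine ⟨l, hl0, fun j => hα j, rfl, ⟨xst, hxstP', hval⟩, ?_⟩
        rintro t ⟨y, hy, rfl⟩
        exact hub y hy
      have hOmem : ((α, bValF b l) : (Fin n → ℤ) × ℝ) ∈ Om := by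
        refine ⟨hPmem, ?_⟩
        have hp : ((coeZR α, bValF b l) : (Fin n → ℝ) × ℝ) = (aRowF A l, bValF b l) :=
          Prod.ext_iff.mpr ⟨funext fun j => hα j, rfl⟩
        show ((coeZR α, bValF b l) : (Fin n → ℝ) × ℝ) ∈ H
        rw [hp, ← hHeq]
        exact hHm
      have hcut := Set.mem_iInter₂.mp hx _ hOmem
      have hcond : ∃ z ∈ S, dotIR α (coeZR z) ≤ bValF b l :=
        ⟨z₀, (hSS' z₀).mp (hTS' hz₀T), by
          rw [dotIR_coe α A hα z₀]
          exact hTle z₀ hz₀T⟩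
      rw [cutLe, if_pos hcond] at hcut
      have hfloor : floorS S α (bValF b l) = dotIR α (coeZR z₀) := by
        apply IsGreatest.csSup_eq
        constructor
        · exact ⟨z₀, (hSS' z₀).mp (hTS' hz₀T), rfl, by
            rw [dotIR_coe α A hα z₀]
            exact hTle z₀ hz₀T⟩
        · rintro t ⟨z, hzS, rfl, hzle⟩
          by_cases hzT : z ∈ T
          · rw [dotIR_coe α A hα z, dotIR_coe α A hα z₀]
            exact hTmax z hzT
          · exfalso
            have := hTstr z ((hSS' z).mpr hzS) hzT
            rw [dotIR_coe α A hα z] at hzle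
            linarith
      have hcut' : dotIR α x ≤ floorS S α (bValF b l) := hcut
      rw [hfloor, dotIR_eq A hα x, dotIR_eq A hα (coeZR z₀)] at hcut'
      exact hcut'
    · intro x hx
      rw [closLe]
      refine Set.mem_iInter₂.mpr ?_
      intro pp hpp
      have hppOm := hpp
      obtain ⟨hPle, hHm⟩ := hpp
      obtain ⟨lam, hlam0, hcoord, hbet, hgr⟩ := hPle
      have hα : ∀ j, ((pp.1 : Fin n → ℤ) j : ℝ) = aRowF A lam j := hcoord
      have hbet' : pp.2 = bValF b lam := hbet
      have hcond : ∃ z ∈ S, dotIR pp.1 (coeZR z) ≤ pp.2 := hec pp hppOm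
      obtain ⟨z₁, hz₁S, hz₁le⟩ := hcond
      set T : Finset (Fin n → ℤ) := S'.filter (fun s => dotIR pp.1 (coeZR s) ≤ pp.2)
        with hTdef
      have hTne : T.Nonempty := ⟨z₁, Finset.mem_filter.mpr ⟨(hSS' z₁).mpr hz₁S, hz₁le⟩⟩
      obtain ⟨z₀, hz₀T, hz₀max⟩ := T.exists_max_image (fun s => dotIR pp.1 (coeZR s)) hTne
      obtain ⟨⟨xb, hxbP, hxbeq⟩, hub⟩ := hgr
      set I : Finset (Fin m) := Finset.univ.filter (fun i => rowP A xb i = (b i : ℝ))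
        with hIdef
      have hxbP' : ∀ i, rowP A xb i ≤ (b i : ℝ) := by
        rw [hP] at hxbP
        exact hxbP
      have hsupp : ∀ i, i ∉ I → lam i = 0 := by
        intro i hi
        have hne : ¬ (rowP A xb i = (b i : ℝ)) := by
          intro hcon
          exact hi (Finset.mem_filter.mpr ⟨Finset.mem_univ i, hcon⟩)
        have hlt : rowP A xb i < (b i : ℝ) := lt_of_le_of_ne (hxbP' i) hne
        have hsum0 : ∑ i', lam i' * ((b i' : ℝ) - rowP A xb i') = 0 := by
          have h1 : dotIR pp.1 xb = ∑ i', lam i' * rowP A xb i' := dotIR_eq A hα xb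
          have h2 : ∀ i', lam i' * ((b i' : ℝ) - rowP A xb i')
              = lam i' * (b i' : ℝ) - lam i' * rowP A xb i' := fun i' => by ring
          rw [Finset.sum_congr rfl fun i' _ => h2 i', Finset.sum_sub_distrib, ← h1,
            hxbeq, hbet']
          exact sub_self _
        have h3 := (Finset.sum_eq_zero_iff_of_nonneg (fun i' _ =>
          mul_nonneg (hlam0 i') (by linarith [hxbP' i']))).mp hsum0 i (Finset.mem_univ i)
        rcases mul_eq_zero.mp h3 with h | h
        · exact h
        · exfalso
          linarith
      have hlamMem : lam ∈ LamSet A b CH cH dH S' I T z₀ := by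
        refine ⟨hz₀T, Finset.filter_subset _ _,
          ⟨xb, hxbP', fun i hi => (Finset.mem_filter.mp hi).2⟩, hlam0, hsupp,
          ⟨pp.1, hα⟩, ?_, ?_, ?_, ?_⟩
        · have hp : ((aRowF A lam, bValF b lam) : (Fin n → ℝ) × ℝ) = (coeZR pp.1, pp.2) :=
            Prod.ext_iff.mpr ⟨funext fun j => (hα j).symm, hbet'.symm⟩
          rw [hp, hHeq]
          exact hHm
        · intro s hs
          have h4 := (Finset.mem_filter.mp hs).2
          rw [dotIR_coe pp.1 A hα s, hbet'] at h4
          exact h4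
        · intro s hs hsnT
          have hns : ¬ (dotIR pp.1 (coeZR s) ≤ pp.2) := by
            intro hc
            exact hsnT (Finset.mem_filter.mpr ⟨hs, hc⟩)
          push_neg at hns
          rw [dotIR_coe pp.1 A hα s, hbet'] at hns
          exact hns
        · intro s hs
          have h4 := hz₀max s hs
          rw [dotIR_coe pp.1 A hα s, dotIR_coe pp.1 A hα z₀] at h4
          exact h4
      have hidx : ((I, T, z₀) : Finset (Fin m) × Finset (Fin n → ℤ) × (Fin n → ℤ)) ∈ idx := by
        rw [hidxdef]
        refine Finset.mem_product.mpr ⟨Finset.mem_univ _, Finset.mem_product.mpr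
          ⟨Finset.mem_powerset.mpr (Finset.filter_subset _ _), ?_⟩⟩
        exact Finset.filter_subset _ _ hz₀T
      have hY := Set.mem_iInter₂.mp hx _ hidx
      have hineq := hY lam hlamMem
      rw [cutLe, if_pos (hec pp hppOm)]
      show dotIR pp.1 x ≤ floorS S pp.1 pp.2
      have hfloor : floorS S pp.1 pp.2 = dotIR pp.1 (coeZR z₀) := by
        apply IsGreatest.csSup_eq
        constructor
        · exact ⟨z₀, (hSS' z₀).mp (Finset.filter_subset _ _ hz₀T), rfl,
            (Finset.mem_filter.mp hz₀T).2⟩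
        · rintro t ⟨z, hzS, rfl, hzle⟩
          exact hz₀max z (Finset.mem_filter.mpr ⟨(hSS' z).mpr hzS, hzle⟩)
      rw [hfloor, dotIR_eq A hα x, dotIR_eq A hα (coeZR z₀)]
      exact hineq
  rw [hmain]
  apply RPF.isRatPolyhedron
  apply RPF.biInter
  rintro ⟨I, T, z₀⟩ _
  refine YSet_RPF A b CH cH dH S' I T z₀ ?_
  rw [hHeq]
  exact hHrec
end
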